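/- arXiv:2009.10657 — 4 statements merged into one kernel-verified Lean document; each statement's English description precedes it below -/
import Mathlib

section
/- In the setting of the extension theorem for signed bimeasures on δ-rings, the kernels are unique ν-almost everywhere: let (X,ℬ) be standard Borel, (T,𝒜) a δ-ring with increasing cover Tₙ ↑ T, Q₀ satisfying conditions (a), (b), (c), and ν the associated supremum measure extended to σ(𝒜). If q, q₁ : T × ℬ → [−1,1] both satisfy: for every t ∈ T the map B ↦ q(t,B) (respectively q₁(t,B)) is a finite signed measure on ℬ, for every B ∈ ℬ the map t ↦ q(t,B) (respectively q₁(t,B)) is σ(𝒜)-measurable, and Q₀(A,B) = ∫_A q(t,B) ν(dt) = ∫_A q₁(t,B) ν(dt) for all A ∈ 𝒜, B ∈ ℬ, then there is a ν-null set N ∈ σ(𝒜) such that q(t,·) = q₁(t,·) as signed measures on ℬ for all t ∉ N. Moreover, if (q⁺,q⁻) and (q₁⁺,q₁⁻) are the Jordan decompositions of q(t,·) and q₁(t,·), then off a ν-null set q⁺(t,·) = q₁⁺(t,·) and q⁻(t,·) = q₁⁻(t,·). -/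
open MeasureTheory Set Filter Topology

/-- A δ-ring of subsets: nonempty, closed under finite unions, set differences,
and countable intersections. -/
structure IsDeltaRing {T : Type*} (𝒜 : Set (Set T)) : Prop where
  nonempty : 𝒜.Nonempty
  union_mem : ∀ ⦃A B : Set T⦄, A ∈ 𝒜 → B ∈ 𝒜 → A ∪ B ∈ 𝒜
  diff_mem : ∀ ⦃A B : Set T⦄, A ∈ 𝒜 → B ∈ 𝒜 → A \ B ∈ 𝒜
  iInter_mem : ∀ A : ℕ → Set T, (∀ n, A n ∈ 𝒜) → (⋂ n, A n) ∈ 𝒜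

/-- A real-valued signed measure on a δ-ring `𝒜`. -/
def IsSignedMeasureOn {T : Type*} (𝒜 : Set (Set T)) (μ : Set T → ℝ) : Prop :=
  μ ∅ = 0 ∧ ∀ A : ℕ → Set T, (∀ n, A n ∈ 𝒜) → Pairwise (Function.onFun Disjoint A) →
    (⋃ n, A n) ∈ 𝒜 → HasSum (fun n => μ (A n)) (μ (⋃ n, A n))

/-- A finite (real-valued, countably additive) signed measure on the σ-algebra of a
measurable space. -/
def IsFiniteSignedMeasure {X : Type*} [MeasurableSpace X] (μ : Set X → ℝ) : Prop :=
  μ ∅ = 0 ∧ ∀ B : ℕ → Set X, (∀ n, MeasurableSet (B n)) →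
    Pairwise (Function.onFun Disjoint B) → HasSum (fun n => μ (B n)) (μ (⋃ n, B n))

/-- The set of sums `∑ i, |Q₀ (Aᵢ) (Bᵢ)|` over all finite families of pairwise disjoint
rectangles `Aᵢ × Bᵢ` with `Aᵢ ∈ 𝒜`, `Aᵢ ⊆ A`, `Bᵢ` measurable. -/
def RectSums {T X : Type*} [MeasurableSpace X] (𝒜 : Set (Set T))
    (Q₀ : Set T → Set X → ℝ) (A : Set T) : Set ℝ :=
  { r | ∃ (n : ℕ) (As : Fin n → Set T) (Bs : Fin n → Set X),
      (∀ i, As i ∈ 𝒜 ∧ As i ⊆ A ∧ MeasurableSet (Bs i)) ∧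
      (Pairwise fun i j => Disjoint (As i ×ˢ Bs i) (As j ×ˢ Bs j)) ∧
      r = ∑ i, |Q₀ (As i) (Bs i)| }

/-!
Fix a measurable `B`. Both `q(·, B)` and `q₁(·, B)` are densities of `Q₀(·, B)` with respect
to `ν` on the δ-ring `𝒜`, which is a π-system generating `σ(𝒜)` and covered by sets of finite
`ν`-measure, so the two densities agree `ν`-a.e. Since `X` is standard Borel, its σ-algebra is
generated by a countable π-system containing `univ`; discarding the countably many null sets
attached to its members leaves a null set off which the signed measures `q(t, ·)` and `q₁(t, ·)`
agree on that π-system, hence everywhere. Uniqueness of the Jordan decomposition gives the rest.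
-/

namespace IsDeltaRing

variable {T : Type*} {𝒜 : Set (Set T)}

theorem inter_mem (h𝒜 : IsDeltaRing 𝒜) {A B : Set T} (hA : A ∈ 𝒜) (hB : B ∈ 𝒜) :
    A ∩ B ∈ 𝒜 := by
  simpa only [sdiff_sdiff_right_self] using h𝒜.diff_mem hA (h𝒜.diff_mem hA hB)

theorem isPiSystem (h𝒜 : IsDeltaRing 𝒜) : IsPiSystem 𝒜 :=
  fun _ hA _ hB _ => h𝒜.inter_mem hA hB

end IsDeltaRing

namespace IsFiniteSignedMeasure

variable {X : Type*} [MeasurableSpace X] {μ : Set X → ℝ}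

open Classical in
noncomputable def toSignedMeasure (hμ : IsFiniteSignedMeasure μ) : SignedMeasure X where
  measureOf' B := if MeasurableSet B then μ B else 0
  empty' := by simp [hμ.1]
  not_measurable' _ hB := if_neg hB
  m_iUnion' B hB hdisj := by
    simpa only [hB, MeasurableSet.iUnion hB, if_true] using hμ.2 B hB hdisj

theorem toSignedMeasure_apply (hμ : IsFiniteSignedMeasure μ) {B : Set X} (hB : MeasurableSet B) :
    hμ.toSignedMeasure B = μ B :=
  if_pos hB

theorem toSignedMeasure_eq_sub (hμ : IsFiniteSignedMeasure μ) {p m : Measure X}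
    [IsFiniteMeasure p] [IsFiniteMeasure m]
    (h : ∀ B, MeasurableSet B → μ B = (p B).toReal - (m B).toReal) :
    hμ.toSignedMeasure = p.toSignedMeasure - m.toSignedMeasure := by
  ext B hB
  rw [toSignedMeasure_apply hμ hB, h B hB, Measure.toSignedMeasure_sub_apply hB]
  rfl

end IsFiniteSignedMeasure

theorem MeasureTheory.Measure.MutuallySingular.eq_of_toSignedMeasure_sub_eq {X : Type*} [MeasurableSpace X]
    {p m p₁ m₁ : Measure X} [IsFiniteMeasure p] [IsFiniteMeasure m] [IsFiniteMeasure p₁]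
    [IsFiniteMeasure m₁] (h : p.MutuallySingular m) (h₁ : p₁.MutuallySingular m₁)
    (heq : p.toSignedMeasure - m.toSignedMeasure = p₁.toSignedMeasure - m₁.toSignedMeasure) :
    p = p₁ ∧ m = m₁ := by
  have hj : (⟨p, m, h⟩ : JordanDecomposition X) = ⟨p₁, m₁, h₁⟩ :=
    JordanDecomposition.toSignedMeasure_injective heq
  injection hj with hp hm
  exact ⟨hp, hm⟩

theorem MeasurableSpace.exists_countable_isPiSystem_generateFrom_eq (X : Type*)
    [m : MeasurableSpace X] [CountablyGenerated X] :
    ∃ S : Set (Set X), S.Countable ∧ IsPiSystem S ∧ univ ∈ S ∧ m = generateFrom S := by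
  let C := countableGeneratingSet X
  refine ⟨sInter '' {F | F.Finite ∧ F ⊆ C},
    ((countable_ofPred_finite_subset countable_countableGeneratingSet).image _), ?_,
    ⟨∅, ⟨finite_empty, empty_subset C⟩, sInter_empty⟩, le_antisymm ?_ ?_⟩
  · rintro _ ⟨F, ⟨hF, hFC⟩, rfl⟩ _ ⟨G, ⟨hG, hGC⟩, rfl⟩ -
    exact ⟨F ∪ G, ⟨hF.union hG, union_subset hFC hGC⟩, sInter_union F G⟩
  · conv_lhs => rw [← generateFrom_countableGeneratingSet (α := X)]
    exact generateFrom_mono fun B hB =>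
      ⟨{B}, ⟨finite_singleton B, singleton_subset_iff.2 hB⟩, sInter_singleton B⟩
  · refine generateFrom_le ?_
    rintro _ ⟨F, ⟨hF, hFC⟩, rfl⟩
    exact MeasurableSet.sInter hF.countable fun B hB => measurableSet_countableGeneratingSet (hFC hB)

theorem ae_eq_of_forall_setIntegral_eq_of_isPiSystem {T E ι : Type*} [m : MeasurableSpace T]
    [NormedAddCommGroup E] [NormedSpace ℝ E] [CompleteSpace E] [Countable ι] {ν : Measure T}
    {𝒜 : Set (Set T)} (hgen : m = MeasurableSpace.generateFrom 𝒜) (h𝒜 : IsPiSystem 𝒜)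
    {Tseq : ι → Set T} (hTmem : ∀ n, Tseq n ∈ 𝒜) (hTcover : ⋃ n, Tseq n = univ)
    {f g : T → E} (hf : ∀ n, IntegrableOn f (Tseq n) ν) (hg : ∀ n, IntegrableOn g (Tseq n) ν)
    (hfg : ∀ A ∈ 𝒜, ∫ t in A, f t ∂ν = ∫ t in A, g t ∂ν) :
    f =ᵐ[ν] g := by
  have hmeas : ∀ A ∈ 𝒜, MeasurableSet A := fun A hA =>
    hgen ▸ MeasurableSpace.measurableSet_generateFrom hA
  rw [← Measure.restrict_univ (μ := ν), ← hTcover, EventuallyEq, ae_restrict_iUnion_iff]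
  refine fun n => (hf n).ae_eq_of_withDensityᵥ_eq (hg n) ?_
  refine VectorMeasure.ext_of_generateFrom 𝒜 (fun A hA => ?_) hgen h𝒜 ?_
  · rw [withDensityᵥ_apply (hf n) (hmeas A hA), withDensityᵥ_apply (hg n) (hmeas A hA),
      Measure.restrict_restrict (hmeas A hA)]
    rcases (A ∩ Tseq n).eq_empty_or_nonempty with hempty | hne
    · simp only [hempty, Measure.restrict_empty, integral_zero_measure]
    · exact hfg _ (h𝒜 A hA _ (hTmem n) hne)
  · rw [withDensityᵥ_apply (hf n) .univ, withDensityᵥ_apply (hg n) .univ,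
      Measure.restrict_univ]
    exact hfg _ (hTmem n)

theorem exists_measurableSet_null_forall_eq_of_ae_eq {T X : Type*} [MeasurableSpace T]
    [MeasurableSpace X] [MeasurableSpace.CountablyGenerated X] {ν : Measure T}
    {μ μ' : T → SignedMeasure X}
    (h : ∀ B, MeasurableSet B → (fun t => μ t B) =ᵐ[ν] fun t => μ' t B) :
    ∃ N : Set T, MeasurableSet N ∧ ν N = 0 ∧ ∀ t ∉ N, μ t = μ' t := by
  obtain ⟨S, hSc, hSπ, hSuniv, hSgen⟩ :=
    MeasurableSpace.exists_countable_isPiSystem_generateFrom_eq X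
  have hSmeas : ∀ B ∈ S, MeasurableSet B := fun B hB =>
    hSgen ▸ MeasurableSpace.measurableSet_generateFrom hB
  set D := ⋃ B ∈ S, {t | μ t B ≠ μ' t B}
  refine ⟨toMeasurable ν D, measurableSet_toMeasurable ν D, ?_, fun t ht => ?_⟩
  · rw [measure_toMeasurable, measure_biUnion_null_iff hSc]
    exact fun B hB => ae_iff.1 (h B (hSmeas B hB))
  · have hS : ∀ B ∈ S, μ t B = μ' t B := by
      simpa [D] using fun hD => ht (subset_toMeasurable ν D hD)
    exact VectorMeasure.ext_of_generateFrom S hS hSgen hSπ (hS univ hSuniv)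

theorem kernels_unique_ae_general {T X : Type*}
    [mT : MeasurableSpace T] [MeasurableSpace X] [StandardBorelSpace X]
    (𝒜 : Set (Set T)) (h𝒜 : IsDeltaRing 𝒜)
    (hmT : mT = MeasurableSpace.generateFrom 𝒜)
    (Tseq : ℕ → Set T) (hTmem : ∀ n, Tseq n ∈ 𝒜)
    (hTcover : ⋃ n, Tseq n = univ)
    (Q₀ : Set T → Set X → ℝ)
    (ν : Measure T) (hν : ∀ A ∈ 𝒜, ν A = ENNReal.ofReal (sSup (RectSums 𝒜 Q₀ A)))
    (q q₁ : T → Set X → ℝ)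
    (hqbdd : ∀ t B, |q t B| ≤ 1) (hq₁bdd : ∀ t B, |q₁ t B| ≤ 1)
    (hqsm : ∀ t, IsFiniteSignedMeasure (q t)) (hq₁sm : ∀ t, IsFiniteSignedMeasure (q₁ t))
    (hqmeas : ∀ B : Set X, MeasurableSet B → Measurable fun t => q t B)
    (hq₁meas : ∀ B : Set X, MeasurableSet B → Measurable fun t => q₁ t B)
    (hqrep : ∀ A ∈ 𝒜, ∀ B : Set X, MeasurableSet B → Q₀ A B = ∫ t in A, q t B ∂ν)
    (hq₁rep : ∀ A ∈ 𝒜, ∀ B : Set X, MeasurableSet B → Q₀ A B = ∫ t in A, q₁ t B ∂ν) :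
    (∃ N : Set T, MeasurableSet N ∧ ν N = 0 ∧
      ∀ t ∉ N, ∀ B : Set X, MeasurableSet B → q t B = q₁ t B) ∧
    (∀ qp qm q₁p q₁m : T → Measure X,
      (∀ t, IsFiniteMeasure (qp t)) → (∀ t, IsFiniteMeasure (qm t)) →
      (∀ t, IsFiniteMeasure (q₁p t)) → (∀ t, IsFiniteMeasure (q₁m t)) →
      (∀ t, (qp t).MutuallySingular (qm t)) → (∀ t, (q₁p t).MutuallySingular (q₁m t)) →
      (∀ t, ∀ B : Set X, MeasurableSet B → q t B = (qp t B).toReal - (qm t B).toReal) →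
      (∀ t, ∀ B : Set X, MeasurableSet B → q₁ t B = (q₁p t B).toReal - (q₁m t B).toReal) →
      ∃ N : Set T, MeasurableSet N ∧ ν N = 0 ∧
        ∀ t ∉ N, qp t = q₁p t ∧ qm t = q₁m t) := by
  have hνfin : ∀ A ∈ 𝒜, ν A ≠ ⊤ := fun A hA => by
    rw [hν A hA]
    exact ENNReal.ofReal_ne_top
  have hint : ∀ (r : T → Set X → ℝ), (∀ t B, |r t B| ≤ 1) →
      (∀ B, MeasurableSet B → Measurable fun t => r t B) →
      ∀ B, MeasurableSet B → ∀ n, IntegrableOn (fun t => r t B) (Tseq n) ν :=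
    fun r hbdd hmeas B hB n => Measure.integrableOn_of_bounded (hνfin _ (hTmem n))
      (hmeas B hB).aestronglyMeasurable (ae_of_all _ fun t => hbdd t B)
  have hae : ∀ B, MeasurableSet B →
      (fun t => (hqsm t).toSignedMeasure B) =ᵐ[ν] fun t => (hq₁sm t).toSignedMeasure B := by
    intro B hB
    simp only [IsFiniteSignedMeasure.toSignedMeasure_apply _ hB]
    exact ae_eq_of_forall_setIntegral_eq_of_isPiSystem hmT h𝒜.isPiSystem hTmem hTcover
      (hint q hqbdd hqmeas B hB) (hint q₁ hq₁bdd hq₁meas B hB)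
      fun A hA => (hqrep A hA B hB).symm.trans (hq₁rep A hA B hB)
  obtain ⟨N, hNmeas, hN0, hN⟩ := exists_measurableSet_null_forall_eq_of_ae_eq hae
  refine ⟨⟨N, hNmeas, hN0, fun t ht B hB => ?_⟩,
    fun qp qm q₁p q₁m _ _ _ _ hsing hsing₁ hdec hdec₁ => ⟨N, hNmeas, hN0, fun t ht => ?_⟩⟩
  · rw [← (hqsm t).toSignedMeasure_apply hB, ← (hq₁sm t).toSignedMeasure_apply hB, hN t ht]
  · refine Measure.MutuallySingular.eq_of_toSignedMeasure_sub_eq (hsing t) (hsing₁ t) ?_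
    rw [← (hqsm t).toSignedMeasure_eq_sub (hdec t), ← (hq₁sm t).toSignedMeasure_eq_sub (hdec₁ t),
      hN t ht]

/-- Uniqueness (ν-a.e.) of the kernels in the extension theorem for
signed bimeasures on δ-rings: if `q` and `q₁` are `[-1,1]`-valued kernels, countably
additive and finite in the second variable, σ(𝒜)-measurable in the first, both
representing `Q₀` via `Q₀(A,B) = ∫_A q(t,B) ν(dt)`, then `q(t,·) = q₁(t,·)` off a
ν-null set; and the respective Jordan decompositions also agree off a ν-null set. -/
theorem kernels_unique_ae {T X : Type*} [Nonempty T]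
    [mT : MeasurableSpace T] [MeasurableSpace X] [StandardBorelSpace X]
    (𝒜 : Set (Set T)) (h𝒜 : IsDeltaRing 𝒜)
    (hmT : mT = MeasurableSpace.generateFrom 𝒜)
    (Tseq : ℕ → Set T) (hTmem : ∀ n, Tseq n ∈ 𝒜) (hTmono : Monotone Tseq)
    (hTcover : ⋃ n, Tseq n = univ)
    (Q₀ : Set T → Set X → ℝ)
    (ha : ∀ A ∈ 𝒜, IsFiniteSignedMeasure (Q₀ A))
    (hb : ∀ B : Set X, MeasurableSet B → IsSignedMeasureOn 𝒜 fun A => Q₀ A B)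
    (hc : ∀ A ∈ 𝒜, BddAbove (RectSums 𝒜 Q₀ A))
    (ν : Measure T) (hν : ∀ A ∈ 𝒜, ν A = ENNReal.ofReal (sSup (RectSums 𝒜 Q₀ A)))
    (q q₁ : T → Set X → ℝ)
    (hqbdd : ∀ t B, |q t B| ≤ 1) (hq₁bdd : ∀ t B, |q₁ t B| ≤ 1)
    (hqsm : ∀ t, IsFiniteSignedMeasure (q t)) (hq₁sm : ∀ t, IsFiniteSignedMeasure (q₁ t))
    (hqmeas : ∀ B : Set X, MeasurableSet B → Measurable fun t => q t B)
    (hq₁meas : ∀ B : Set X, MeasurableSet B → Measurable fun t => q₁ t B)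
    (hqrep : ∀ A ∈ 𝒜, ∀ B : Set X, MeasurableSet B → Q₀ A B = ∫ t in A, q t B ∂ν)
    (hq₁rep : ∀ A ∈ 𝒜, ∀ B : Set X, MeasurableSet B → Q₀ A B = ∫ t in A, q₁ t B ∂ν) :
    (∃ N : Set T, MeasurableSet N ∧ ν N = 0 ∧
      ∀ t ∉ N, ∀ B : Set X, MeasurableSet B → q t B = q₁ t B) ∧
    (∀ qp qm q₁p q₁m : T → Measure X,
      (∀ t, IsFiniteMeasure (qp t)) → (∀ t, IsFiniteMeasure (qm t)) →
      (∀ t, IsFiniteMeasure (q₁p t)) → (∀ t, IsFiniteMeasure (q₁m t)) →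
      (∀ t, (qp t).MutuallySingular (qm t)) → (∀ t, (q₁p t).MutuallySingular (q₁m t)) →
      (∀ t, ∀ B : Set X, MeasurableSet B → q t B = (qp t B).toReal - (qm t B).toReal) →
      (∀ t, ∀ B : Set X, MeasurableSet B → q₁ t B = (q₁p t B).toReal - (q₁m t B).toReal) →
      ∃ N : Set T, MeasurableSet N ∧ ν N = 0 ∧
        ∀ t ∉ N, qp t = q₁p t ∧ qm t = q₁m t) :=
  kernels_unique_ae_general (mT := mT) 𝒜 h𝒜 hmT Tseq hTmem hTcover Q₀ ν hν q q₁ hqbdd hq₁bdd hqsm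
    hq₁sm hqmeas hq₁meas hqrep hq₁rep
end

section
/- Let X be an arbitrary nonempty set, ℛ a δ-ring on X, and μ an extended signed measure on ℛ, i.e. μ : ℛ → [−∞,∞] with μ(∅) = 0, not attaining both +∞ and −∞, and σ-additive in the sense that for every sequence of pairwise disjoint sets A₁, A₂, … ∈ ℛ with A = ⋃ₖ Aₖ ∈ ℛ one has μ(A) = ∑ₖ μ(Aₖ), the value of the series being independent of the order of summation. Then there exist two unique (positive, possibly infinite) measures μ⁺ and μ⁻ on ℛ such that μ = μ⁺ − μ⁻ on ℛ and such that for every A ∈ ℛ the restrictions of μ⁺ and μ⁻ to the σ-algebra {A ∩ B : B ∈ ℛ} on A are mutually singular. -/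
open MeasureTheory Set Filter Topology

def IsMeasureOn {T : Type*} (𝒜 : Set (Set T)) (m : Set T → ENNReal) : Prop :=
  m ∅ = 0 ∧ ∀ A : ℕ → Set T, (∀ n, A n ∈ 𝒜) → Pairwise (Function.onFun Disjoint A) →
    (⋃ n, A n) ∈ 𝒜 → m (⋃ n, A n) = ∑' n, m (A n)

def IsJordanPairOn {X : Type*} (ℛ : Set (Set X)) (μ : Set X → EReal)
    (p m : Set X → ENNReal) : Prop :=
  IsMeasureOn ℛ p ∧ IsMeasureOn ℛ m ∧
  (∀ A ∈ ℛ, μ A = (p A : EReal) - (m A : EReal)) ∧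
  (∀ A ∈ ℛ, ∃ E, E ∈ ℛ ∧ E ⊆ A ∧
    (∀ B ∈ ℛ, B ⊆ A \ E → p B = 0) ∧ (∀ B ∈ ℛ, B ⊆ E → m B = 0))


-- ## Auxiliary machinery

noncomputable def eToENN (x : EReal) : ENNReal :=
  if x = ⊤ then ⊤ else ENNReal.ofReal x.toReal

lemma eToENN_top : eToENN ⊤ = ⊤ := if_pos rfl

lemma eToENN_coe (r : ℝ) : eToENN (r : EReal) = ENNReal.ofReal r := by
  simp [eToENN]

lemma eToENN_coe_ennreal (x : ENNReal) : eToENN (x : EReal) = x := by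
  rcases eq_or_ne x ⊤ with rfl | hx
  · simp [eToENN]
  · rw [eToENN, if_neg (by simpa [EReal.coe_ennreal_eq_top_iff] using hx),
      EReal.toReal_coe_ennreal, ENNReal.ofReal_toReal hx]

lemma coe_eToENN {x : EReal} (hx : 0 ≤ x) : ((eToENN x : ENNReal) : EReal) = x := by
  rcases eq_or_ne x ⊤ with rfl | hx'
  · simp [eToENN]
  · have hb : x ≠ ⊥ := fun h => by simp [h] at hx
    rw [eToENN, if_neg hx', EReal.coe_ennreal_ofReal,
      max_eq_left (by simpa using EReal.toReal_le_toReal hx (by simp) hx'), EReal.coe_toReal hx' hb]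

lemma eToENN_mono : Monotone eToENN := by
  intro x y h
  induction x <;> induction y <;>
    simp_all [eToENN, EReal.toReal_coe, ENNReal.ofReal_le_ofReal, le_top] <;>
    first
      | exact le_top
      | simp_all [EReal.coe_le_coe_iff, ENNReal.ofReal_le_ofReal]
      | exact absurd h (by simp)

lemma eToENN_of_nonpos {x : EReal} (hx : x ≤ 0) : eToENN x = 0 := by
  have hx' : x ≠ ⊤ := fun h => by simp [h, top_le_iff] at hx
  rw [eToENN, if_neg hx', ENNReal.ofReal_eq_zero]
  induction x <;> simp_all [EReal.toReal_coe]


noncomputable def erealRealHom : ℝ →+ EReal := ⟨⟨Real.toEReal, EReal.coe_zero⟩, EReal.coe_add⟩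

noncomputable def erealENNHom : ENNReal →+ EReal :=
  ⟨⟨(fun x => (x : EReal)), EReal.coe_ennreal_zero⟩, EReal.coe_ennreal_add⟩

lemma hasSum_ereal_of_real {f : ℕ → ℝ} {a : ℝ} (h : HasSum f a) :
    HasSum (fun n => ((f n : ℝ) : EReal)) ((a : ℝ) : EReal) :=
  h.map erealRealHom continuous_coe_real_ereal

lemma hasSum_ereal_of_ennreal (f : ℕ → ENNReal) :
    HasSum (fun n => ((f n : ENNReal) : EReal)) (((∑' n, f n : ENNReal) : ENNReal) : EReal) :=
  ENNReal.summable.hasSum.map erealENNHom continuous_coe_ennreal_ereal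

lemma ereal_le_zero {x : EReal} (h : ∀ e : ℝ, 0 < e → x ≤ (e : EReal)) : x ≤ 0 := by
  by_contra h0
  obtain ⟨y, hy0, hyx⟩ := EReal.exists_between_coe_real (not_le.1 h0)
  exact absurd (h y (EReal.coe_pos.1 hy0)) (not_le.2 hyx)

lemma ereal_nonneg {x : EReal} (h : ∀ e : ℝ, 0 < e → (((-e : ℝ)) : EReal) ≤ x) : 0 ≤ x := by
  by_contra h0
  obtain ⟨y, hxy, hy0⟩ := EReal.exists_between_coe_real (not_le.1 h0)
  have := h (-y) (by simpa using EReal.coe_neg'.1 hy0)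
  rw [neg_neg] at this
  exact absurd this (not_le.2 hxy)

section ring
variable {X : Type*} {ℛ : Set (Set X)} (hℛ : IsDeltaRing ℛ)
include hℛ

lemma dr_empty : ∅ ∈ ℛ := by
  obtain ⟨A, hA⟩ := hℛ.nonempty
  simpa using hℛ.diff_mem hA hA

lemma dr_inter {A B : Set X} (hA : A ∈ ℛ) (hB : B ∈ ℛ) : A ∩ B ∈ ℛ := by
  have := hℛ.diff_mem hA (hℛ.diff_mem hA hB)
  rwa [Set.diff_diff_right, Set.diff_self, Set.empty_union] at this

lemma dr_iUnion {D : ℕ → Set X} {B : Set X} (hD : ∀ n, D n ∈ ℛ) (hDB : ∀ n, D n ⊆ B)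
    (hB : B ∈ ℛ) : (⋃ n, D n) ∈ ℛ := by
  have h1 : (⋂ n, B \ D n) ∈ ℛ := hℛ.iInter_mem _ fun n => hℛ.diff_mem hB (hD n)
  have h2 : (⋃ n, D n) = B \ ⋂ n, B \ D n := by
    ext x
    simp only [Set.mem_iUnion, Set.mem_diff, Set.mem_iInter, not_forall]
    constructor
    · rintro ⟨n, hn⟩
      exact ⟨hDB n hn, ⟨n, fun h => (h.2 hn)⟩⟩
    · rintro ⟨hxB, n, hn⟩
      exact ⟨n, by tauto⟩
  rw [h2]; exact hℛ.diff_mem hB h1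

end ring

section mu
variable {X : Type*} {ℛ : Set (Set X)} {μ : Set X → EReal}
  (hℛ : IsDeltaRing ℛ) (hμ0 : μ ∅ = 0)
  (hadd : ∀ A : ℕ → Set X, (∀ n, A n ∈ ℛ) → Pairwise (Function.onFun Disjoint A) →
      (⋃ n, A n) ∈ ℛ → HasSum (fun n => μ (A n)) (μ (⋃ n, A n)))
include hℛ hμ0 hadd

lemma mu_add {A B : Set X} (hA : A ∈ ℛ) (hB : B ∈ ℛ) (hAB : Disjoint A B) :
    μ (A ∪ B) = μ A + μ B := by
  classical
  set f : ℕ → Set X := fun n => if n = 0 then A else if n = 1 then B else ∅ with hf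
  have hmem : ∀ n, f n ∈ ℛ := by
    intro n; rcases n with _ | _ | n <;> simp [hf, hA, hB, dr_empty hℛ]
  have hdis : Pairwise (Function.onFun Disjoint f) := by
    intro i j hij
    rcases i with _ | _ | i <;> rcases j with _ | _ | j <;>
      simp_all [hf, Function.onFun, hAB, hAB.symm, Set.disjoint_empty, Set.empty_disjoint] <;>
      first
        | exact hAB
        | exact hAB.symm
        | exact Set.disjoint_empty _
        | exact Set.empty_disjoint _
  have hun : (⋃ n, f n) = A ∪ B := by
    ext x
    simp only [Set.mem_iUnion, Set.mem_union]
    constructor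
    · rintro ⟨n, hn⟩
      rcases n with _ | _ | n
      · exact Or.inl hn
      · exact Or.inr hn
      · simp [hf] at hn
    · rintro (h | h)
      exacts [⟨0, by simp [hf, h]⟩, ⟨1, by simp [hf, h]⟩]
  have hABm : A ∪ B ∈ ℛ := hℛ.union_mem hA hB
  have h1 : HasSum (fun n => μ (f n)) (μ (A ∪ B)) := by
    have := hadd f hmem hdis (by rwa [hun]); rwa [hun] at this
  have h2 : HasSum (fun n => μ (f n)) (μ A + μ B) := by
    have hz : ∀ n ∉ ({0, 1} : Finset ℕ), μ (f n) = 0 := by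
      intro n hn
      rcases n with _ | _ | n
      · simp at hn
      · simp at hn
      · simpa [hf] using hμ0
    have : HasSum (fun n => μ (f n)) (∑ b ∈ ({0, 1} : Finset ℕ), μ (f b)) :=
      hasSum_sum_of_ne_finset_zero hz
    rwa [Finset.sum_pair (by norm_num : (0:ℕ) ≠ 1), show f 0 = A from rfl,
      show f 1 = B from rfl] at this
  exact h1.unique h2

lemma mu_diff {A B : Set X} (hA : A ∈ ℛ) (hB : B ∈ ℛ) (hBA : B ⊆ A) :
    μ A = μ B + μ (A \ B) := by
  have := mu_add hℛ hμ0 hadd hB (hℛ.diff_mem hA hB) disjoint_sdiff_right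
  rwa [Set.union_diff_cancel hBA] at this

end mu

lemma hasSum_nonneg_toENN {f : ℕ → EReal} {L : EReal} (hf : ∀ n, 0 ≤ f n) (h : HasSum f L) :
    (∑' n, eToENN (f n)) = eToENN L := by
  have h2 := hasSum_ereal_of_ennreal (fun n => eToENN (f n))
  simp only [coe_eToENN (hf _)] at h2
  rw [h.unique h2, eToENN_coe_ennreal]

lemma hasSum_real_of_ereal {r : ℕ → ℝ} {l : ℝ}
    (h : HasSum (fun n => ((r n : ℝ) : EReal)) ((l : ℝ) : EReal)) : HasSum r l := by
  have : (fun s : Finset ℕ => ∑ i ∈ s, ((r i : ℝ) : EReal))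
      = fun s : Finset ℕ => (((∑ i ∈ s, r i : ℝ) : ℝ) : EReal) := by
    funext s; exact (map_sum erealRealHom r s).symm
  rw [HasSum, this] at h
  exact EReal.tendsto_coe.1 h

lemma hasSum_nonpos_toENN {f : ℕ → EReal} {L : EReal} (hf : ∀ n, f n ≤ 0)
    (hb : ∀ n, f n ≠ ⊥) (hL : L ≠ ⊥) (h : HasSum f L) :
    (∑' n, eToENN (-f n)) = eToENN (-L) := by
  have hft : ∀ n, f n ≠ ⊤ := by
    intro n hn
    have := hf n
    rw [hn] at this
    exact absurd this (by simp)
  have hfr : ∀ n, f n = (((f n).toReal : ℝ) : EReal) := fun n => (EReal.coe_toReal (hft n) (hb n)).symm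
  set r : ℕ → ℝ := fun n => (f n).toReal with hr
  have hL0 : L ≤ 0 := hasSum_le hf h hasSum_zero
  have hLt : L ≠ ⊤ := fun hn => by rw [hn] at hL0; exact absurd hL0 (by simp)
  have hLr : L = ((L.toReal : ℝ) : EReal) := (EReal.coe_toReal hLt hL).symm
  have hsum : HasSum r L.toReal := by
    apply hasSum_real_of_ereal
    rw [← hLr]
    have : (fun n => ((r n : ℝ) : EReal)) = f := by funext n; exact (hfr n).symm
    rwa [this]
  have hrle : ∀ n, r n ≤ 0 := by
    intro n
    have := EReal.toReal_le_toReal (hf n) (hb n) (by simp)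
    simpa using this
  have h1 : ∀ n, eToENN (-f n) = ENNReal.ofReal (-(r n)) := by
    intro n
    rw [hfr n, ← EReal.coe_neg, eToENN_coe]
  have h2 : eToENN (-L) = ENNReal.ofReal (-(L.toReal)) := by
    conv_lhs => rw [hLr, ← EReal.coe_neg, eToENN_coe]
  simp only [h1, h2]
  rw [← ENNReal.ofReal_tsum_of_nonneg (fun n => by linarith [hrle n]) hsum.summable.neg]
  congr 1
  rw [tsum_neg, hsum.tsum_eq]

lemma eToENN_ne_top {x : EReal} (hx : x ≠ ⊤) : eToENN x ≠ ⊤ := by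
  rw [eToENN, if_neg hx]; exact ENNReal.ofReal_ne_top

lemma eToENN_zero : eToENN 0 = 0 := by
  rw [show (0 : EReal) = ((0:ℝ) : EReal) from rfl, eToENN_coe, ENNReal.ofReal_zero]

lemma ereal_add_ne_top {x y : EReal} (hx : x ≠ ⊤) (hy : y ≠ ⊤) : x + y ≠ ⊤ := by
  induction x <;> induction y <;> simp_all [← EReal.coe_add]

lemma ereal_neg_sum {ι : Type*} (t : Finset ι) (f : ι → EReal) (hf : ∀ i ∈ t, f i ≠ ⊤) :
    (∑ i ∈ t, f i ≠ ⊤) ∧ ∑ i ∈ t, (-(f i)) = -∑ i ∈ t, f i := by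
  classical
  induction t using Finset.induction_on with
  | empty => simp
  | insert _ _ hnotmem =>
      rename_i a u ih
      have h1 : f a ≠ ⊤ := hf a (Finset.mem_insert_self a u)
      have h2 := ih (fun i hi => hf i (Finset.mem_insert_of_mem hi))
      rw [Finset.sum_insert hnotmem, Finset.sum_insert hnotmem]
      refine ⟨ereal_add_ne_top h1 h2.1, ?_⟩
      rw [h2.2, EReal.neg_add (Or.inr h2.1) (Or.inl h1), sub_eq_add_neg]

lemma ereal_swap_sub {x y : ENNReal} (hy : y ≠ ⊤) :
    -((x : EReal) - (y : EReal)) = (y : EReal) - (x : EReal) := by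
  have hyr : ((y : ENNReal) : EReal) = ((y.toReal : ℝ) : EReal) := by
    rw [← ENNReal.ofReal_toReal hy, EReal.coe_ennreal_ofReal,
      max_eq_left ENNReal.toReal_nonneg, ENNReal.toReal_ofReal ENNReal.toReal_nonneg]
  rcases eq_or_ne x ⊤ with rfl | hx
  · rw [EReal.coe_ennreal_top, hyr]
    rw [EReal.top_sub_coe, EReal.neg_top, EReal.sub_top]
  · have hxr : ((x : ENNReal) : EReal) = ((x.toReal : ℝ) : EReal) := by
      rw [← ENNReal.ofReal_toReal hx, EReal.coe_ennreal_ofReal,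
        max_eq_left ENNReal.toReal_nonneg, ENNReal.toReal_ofReal ENNReal.toReal_nonneg]
    rw [hyr, hxr, ← EReal.coe_sub, ← EReal.coe_sub, ← EReal.coe_neg, neg_sub]


lemma exists_seq {α : Type*} (P : α → Prop) (R : α → ℕ → α → Prop) (a0 : α) (h0 : P a0)
    (hstep : ∀ a n, P a → ∃ b, P b ∧ R a n b) :
    ∃ f : ℕ → α, f 0 = a0 ∧ (∀ n, P (f n)) ∧ ∀ n, R (f n) n (f (n+1)) := by
  choose! g hgP hgR using hstep
  have key : ∀ n, P (Nat.rec (motive := fun _ => α) a0 (fun n prev => g prev n) n) := by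
    intro n
    induction n with
    | zero => exact h0
    | succ n ih => exact hgP _ n ih
  exact ⟨_, rfl, key, fun n => hgR _ n (key n)⟩

def Unb {X : Type*} (ℛ : Set (Set X)) (μ : Set X → EReal) (A : Set X) : Prop :=
  ∀ r : ℝ, ∃ B, B ∈ ℛ ∧ B ⊆ A ∧ μ B < (r : EReal)

section main
variable {X : Type*} {ℛ : Set (Set X)} {μ : Set X → EReal}
  (hℛ : IsDeltaRing ℛ) (hμ0 : μ ∅ = 0)
  (hadd : ∀ A : ℕ → Set X, (∀ n, A n ∈ ℛ) → Pairwise (Function.onFun Disjoint A) →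
      (⋃ n, A n) ∈ ℛ → HasSum (fun n => μ (A n)) (μ (⋃ n, A n)))
include hℛ hμ0 hadd

lemma jd_split {A : Set X} (hA : A ∈ ℛ) (hU : Unb ℛ μ A) (r : ℝ) :
    ∃ B, (B ∈ ℛ ∧ B ⊆ A ∧ μ B < (r : EReal)) ∧ (Unb ℛ μ B ∨ Unb ℛ μ (A \ B)) := by
  obtain ⟨B, hBm, hBA, hBr⟩ := hU r
  refine ⟨B, ⟨hBm, hBA, hBr⟩, ?_⟩
  by_contra hc
  push_neg at hc
  obtain ⟨h1, h2⟩ := hc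
  rw [Unb] at h1 h2
  push_neg at h1 h2
  obtain ⟨r0, h1⟩ := h1
  obtain ⟨r1, h2⟩ := h2
  obtain ⟨C, hCm, hCA, hCr⟩ := hU (r0 + r1)
  have e1 : μ C = μ (C ∩ B) + μ (C \ B) := by
    have h := mu_diff hℛ hμ0 hadd hCm (dr_inter hℛ hCm hBm) inter_subset_left
    rwa [Set.diff_self_inter] at h
  have g1 : (r0 : EReal) ≤ μ (C ∩ B) :=
    h1 _ (dr_inter hℛ hCm hBm) (fun x hx => hx.2)
  have g2 : (r1 : EReal) ≤ μ (C \ B) :=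
    h2 _ (hℛ.diff_mem hCm hBm) (fun x hx => ⟨hCA hx.1, hx.2⟩)
  have : ((r0 + r1 : ℝ) : EReal) ≤ μ C := by
    rw [e1, EReal.coe_add]
    exact add_le_add g1 g2
  exact absurd hCr (not_lt.2 this)

lemma jd_bounded (hbot : ∀ A ∈ ℛ, μ A ≠ ⊥) {A : Set X} (hA : A ∈ ℛ) : ¬ Unb ℛ μ A := by
  classical
  intro hU
  have hstep : ∀ (S : Set X) (n : ℕ), (S ∈ ℛ ∧ S ⊆ A ∧ Unb ℛ μ S) →
      ∃ T, (T ∈ ℛ ∧ T ⊆ A ∧ Unb ℛ μ T) ∧ (T ⊆ S ∧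
        (μ T < ((-(n+1 : ℝ)) : EReal) ∨ μ (S \ T) < ((-(n+1 : ℝ)) : EReal))) := by
    intro S n hS
    obtain ⟨B, ⟨hBm, hBS, hBr⟩, hUor⟩ := jd_split hℛ hμ0 hadd hS.1 hS.2.2 (-(n+1 : ℝ))
    rcases hUor with hUB | hUC
    · exact ⟨B, ⟨hBm, hBS.trans hS.2.1, hUB⟩, hBS, Or.inl hBr⟩
    · refine ⟨S \ B, ⟨hℛ.diff_mem hS.1 hBm, diff_subset.trans hS.2.1, hUC⟩,
        diff_subset, Or.inr ?_⟩
      rwa [Set.diff_diff_cancel_left hBS]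
  obtain ⟨As, hAs0, hAsP, hAsR⟩ := exists_seq
    (P := fun S => S ∈ ℛ ∧ S ⊆ A ∧ Unb ℛ μ S)
    (R := fun S n T => T ⊆ S ∧
      (μ T < ((-(n+1 : ℝ)) : EReal) ∨ μ (S \ T) < ((-(n+1 : ℝ)) : EReal)))
    A ⟨hA, subset_rfl, hU⟩ hstep
  have hmem : ∀ n, As n ∈ ℛ := fun n => (hAsP n).1
  have hsubA : ∀ n, As n ⊆ A := fun n => (hAsP n).2.1
  have hdec : ∀ n, As (n+1) ⊆ As n := fun n => (hAsR n).1
  have hor : ∀ n, μ (As (n+1)) < ((-(n+1 : ℝ)) : EReal) ∨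
      μ (As n \ As (n+1)) < ((-(n+1 : ℝ)) : EReal) := fun n => (hAsR n).2
  have hAnti : Antitone As := antitone_nat_of_succ_le hdec
  set C : ℕ → Set X := fun n => As n \ As (n+1) with hC
  have hCmem : ∀ n, C n ∈ ℛ := fun n => hℛ.diff_mem (hmem n) (hmem (n+1))
  have hCsub : ∀ n, C n ⊆ A := fun n => diff_subset.trans (hsubA n)
  have hCkey : ∀ i j, i < j → Disjoint (C i) (C j) := by
    intro i j hij
    rw [Set.disjoint_left]
    intro x hxi hxj
    exact hxi.2 (hAnti (by omega : i + 1 ≤ j) hxj.1)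
  have hCdisj : Pairwise (Function.onFun Disjoint C) := by
    intro i j hij
    rcases lt_or_gt_of_ne hij with h | h
    · exact hCkey i j h
    · exact (hCkey j i h).symm
  by_cases hSinf : {n : ℕ | μ (C n) < ((-1 : ℝ) : EReal)}.Infinite
  · -- infinitely many pieces with mass < -1 : sum diverges to ⊥
    set D : ℕ → Set X := fun n => if μ (C n) < ((-1 : ℝ) : EReal) then C n else ∅ with hD
    have hDmem : ∀ n, D n ∈ ℛ := by
      intro n; simp only [hD]; split_ifs <;> [exact hCmem n; exact dr_empty hℛ]
    have hDsub : ∀ n, D n ⊆ A := by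
      intro n; simp only [hD]; split_ifs <;> [exact hCsub n; exact empty_subset A]
    have hDdisj : Pairwise (Function.onFun Disjoint D) := by
      intro i j hij
      simp only [Function.onFun, hD]
      split_ifs <;>
        first
          | exact hCdisj hij
          | exact Set.disjoint_empty _
          | exact Set.empty_disjoint _
    have hDU : (⋃ n, D n) ∈ ℛ := dr_iUnion hℛ hDmem hDsub hA
    have hsum := hadd D hDmem hDdisj hDU
    have hterm : ∀ i, μ (D i) ≤ 0 := by
      intro i
      simp only [hD]
      split_ifs with h
      · refine le_of_lt (lt_of_lt_of_le h ?_)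
        rw [show ((0 : EReal)) = ((0 : ℝ) : EReal) from rfl]
        exact EReal.coe_le_coe_iff.2 (by norm_num)
      · simp [hμ0]
    have hbotT : Tendsto (fun s : Finset ℕ => ∑ i ∈ s, μ (D i)) atTop (𝓝 (⊥ : EReal)) := by
      rw [EReal.tendsto_nhds_bot_iff_real]
      intro x
      obtain ⟨k, hk⟩ := exists_nat_gt (-x)
      obtain ⟨s0, hs0S, hs0card⟩ := hSinf.exists_subset_card_eq k
      filter_upwards [Filter.eventually_ge_atTop s0] with t hts
      have hsplit : ∑ i ∈ t, μ (D i) = ∑ i ∈ t \ s0, μ (D i) + ∑ i ∈ s0, μ (D i) :=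
        (Finset.sum_sdiff hts).symm
      have h1 : ∑ i ∈ t \ s0, μ (D i) ≤ 0 := Finset.sum_nonpos (fun i _ => hterm i)
      have h2 : ∑ i ∈ s0, μ (D i) ≤ ((-(k : ℝ)) : EReal) := by
        have hle : ∀ i ∈ s0, μ (D i) ≤ ((-1 : ℝ) : EReal) := by
          intro i hi
          have hiS : μ (C i) < ((-1 : ℝ) : EReal) := hs0S hi
          simp only [hD]
          rw [if_pos hiS]
          exact le_of_lt hiS
        calc ∑ i ∈ s0, μ (D i) ≤ ∑ _i ∈ s0, ((-1 : ℝ) : EReal) := Finset.sum_le_sum hle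
          _ = ((-(k : ℝ)) : EReal) := by
              rw [Finset.sum_const, hs0card]
              rw [← EReal.coe_nsmul]
              exact_mod_cast (by simp : ((k • (-1 : ℝ) : ℝ)) = -(k : ℝ))
      calc ∑ i ∈ t, μ (D i) = _ := hsplit
        _ ≤ 0 + ((-(k : ℝ)) : EReal) := add_le_add h1 h2
        _ = ((-(k : ℝ)) : EReal) := zero_add _
        _ < (x : EReal) := EReal.coe_lt_coe_iff.2 (by linarith)
    exact hbot _ hDU (tendsto_nhds_unique hsum hbotT)
  · -- eventually the chain itself has very negative measure
    have hSfin : {n : ℕ | μ (C n) < ((-1 : ℝ) : EReal)}.Finite := Set.not_infinite.1 hSinf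
    obtain ⟨N, hN⟩ := hSfin.bddAbove
    simp only [mem_upperBounds, Set.mem_setOf_eq] at hN
    have hlt : ∀ n, N + 1 ≤ n → μ (As (n+1)) < ((-(n+1 : ℝ)) : EReal) := by
      intro n hn
      rcases hor n with h | h
      · exact h
      · exfalso
        have hnS : μ (C n) < ((-1 : ℝ) : EReal) :=
          lt_of_lt_of_le h (EReal.coe_le_coe_iff.2 (by push_cast; linarith))
        have hle : n ≤ N := hN n hnS
        omega
    set M := N + 2 with hM
    have hAsM : ∀ n, M ≤ n → μ (As n) < ((-(n : ℝ)) : EReal) := by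
      intro n hn
      rcases n with _ | m
      · omega
      · have := hlt m (by omega)
        convert this using 2
        push_cast; ring
    have hfinAs : ∀ n, M ≤ n → μ (As n) = (((μ (As n)).toReal : ℝ) : EReal) := by
      intro n hn
      exact (EReal.coe_toReal (lt_top_iff_ne_top.1 (lt_trans (hAsM n hn) (EReal.coe_lt_top _)))
        (hbot _ (hmem n))).symm
    set r : ℕ → ℝ := fun n => (μ (As n)).toReal with hr
    have hrle : ∀ n, M ≤ n → r n ≤ -(n : ℝ) := by
      intro n hn
      have := hAsM n hn
      rw [hfinAs n hn] at this
      exact le_of_lt (EReal.coe_lt_coe_iff.1 this)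
    set c : ℕ → ℝ := fun n => r n - r (n+1) with hc'
    have hcμ : ∀ n, M ≤ n → μ (C n) = ((c n : ℝ) : EReal) := by
      intro n hn
      have e := mu_diff hℛ hμ0 hadd (hmem n) (hmem (n+1)) (hdec n)
      rw [hfinAs n hn, hfinAs (n+1) (by omega)] at e
      have hCb : μ (C n) ≠ ⊥ := hbot _ (hCmem n)
      have hCt : μ (C n) ≠ ⊤ := by
        intro h
        rw [hC] at h
        rw [h, EReal.add_top_of_ne_bot (EReal.coe_ne_bot _)] at e
        exact EReal.coe_ne_top _ e
      rw [← EReal.coe_toReal hCt hCb] at e ⊢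
      rw [hC] at e ⊢
      rw [← EReal.coe_add, EReal.coe_eq_coe_iff] at e
      rw [EReal.coe_eq_coe_iff, hc']
      simp only [hr] at e ⊢
      linarith
    have htel : ∀ j, ∑ i ∈ Finset.range j, c (M + i) = r M - r (M + j) := by
      intro j
      induction j with
      | zero => simp
      | succ j ih =>
          rw [Finset.sum_range_succ, ih]
          have : M + (j + 1) = (M + j) + 1 := by omega
          rw [this, hc']
          ring
    have hImem : (⋂ i, As i) ∈ ℛ := hℛ.iInter_mem As hmem
    set G : ℕ → Set X := fun k => Nat.casesOn k (⋂ i, As i) (fun j => C (M + j)) with hG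
    have hGmem : ∀ k, G k ∈ ℛ := by
      intro k; rcases k with _ | k
      · exact hImem
      · exact hCmem (M + k)
    have hGsub : ∀ k, G k ⊆ A := by
      intro k; rcases k with _ | k
      · exact (Set.iInter_subset As 0).trans (hsubA 0)
      · exact hCsub (M + k)
    have hIsub : ∀ m, (⋂ i, As i) ⊆ As m := fun m => Set.iInter_subset As m
    have hGdisj : Pairwise (Function.onFun Disjoint G) := by
      intro i j hij
      have key : ∀ k, Disjoint (⋂ i, As i) (C (M + k)) := by
        intro k
        rw [Set.disjoint_left]
        intro x hx hxC
        exact hxC.2 (hIsub (M + k + 1) hx)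
      rcases i with _ | i <;> rcases j with _ | j
      · omega
      · exact key j
      · exact (key i).symm
      · exact hCdisj (by omega : M + i ≠ M + j)
    have hGU : (⋃ k, G k) = As M := by
      apply Set.Subset.antisymm
      · apply Set.iUnion_subset
        intro k
        rcases k with _ | k
        · exact hIsub M
        · exact (Set.diff_subset).trans (hAnti (by omega : M ≤ M + k))
      · intro x hx
        by_cases hxI : x ∈ ⋂ i, As i
        · exact Set.mem_iUnion.2 ⟨0, hxI⟩
        · have hex : ∃ i, x ∉ As i := by simpa [Set.mem_iInter] using hxI
          have hn1 : x ∉ As (Nat.find hex) := Nat.find_spec hex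
          set n := Nat.find hex with hn
          have hnM : M + 1 ≤ n := by
            by_contra hcon
            push_neg at hcon
            rcases Nat.lt_succ_iff.1 hcon with hle
            exact hn1 (hAnti hle hx)
          have hxm : x ∈ As (n - 1) := by
            have := Nat.find_min hex (m := n - 1) (by omega)
            simpa using this
          refine Set.mem_iUnion.2 ⟨(n - 1 - M) + 1, ?_⟩
          show x ∈ C (M + (n - 1 - M))
          have heq : M + (n - 1 - M) = n - 1 := by omega
          rw [heq]
          refine ⟨hxm, ?_⟩
          have : n - 1 + 1 = n := by omega
          rw [this]
          exact hn1
    have hGUm : (⋃ k, G k) ∈ ℛ := by rw [hGU]; exact hmem M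
    have hsum := hadd G hGmem hGdisj hGUm
    rw [hGU] at hsum
    have hts := hsum.tendsto_sum_nat
    have hIbot : μ (⋂ i, As i) ≠ ⊥ := hbot _ hImem
    have key : ∀ j, ∑ i ∈ Finset.range (j+1), μ (G i)
        = μ (⋂ i, As i) + (((r M - r (M + j)) : ℝ) : EReal) := by
      intro j
      rw [Finset.sum_range_succ']
      have h1 : ∀ i ∈ Finset.range j, μ (G (i+1)) = ((c (M + i) : ℝ) : EReal) :=
        fun i _ => hcμ (M + i) (by omega)
      rw [Finset.sum_congr rfl h1]
      have h2 : ∑ i ∈ Finset.range j, ((c (M + i) : ℝ) : EReal)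
          = (((∑ i ∈ Finset.range j, c (M + i)) : ℝ) : EReal) :=
        (map_sum erealRealHom _ _).symm
      rw [h2, htel j]
      exact add_comm _ _
    have htop : Tendsto (fun k => ∑ i ∈ Finset.range k, μ (G i)) atTop (𝓝 (⊤ : EReal)) := by
      rw [EReal.tendsto_nhds_top_iff_real]
      intro x
      rcases eq_or_ne (μ (⋂ i, As i)) ⊤ with htop' | hntop
      · filter_upwards [eventually_ge_atTop 1] with k hk
        obtain ⟨j, rfl⟩ : ∃ j, k = j + 1 := ⟨k - 1, by omega⟩
        rw [key j, htop', EReal.top_add_coe]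
        exact EReal.coe_lt_top x
      · have hIr : μ (⋂ i, As i) = (((μ (⋂ i, As i)).toReal : ℝ) : EReal) :=
          (EReal.coe_toReal hntop hIbot).symm
        set a := (μ (⋂ i, As i)).toReal
        obtain ⟨j0, hj0⟩ := exists_nat_gt (x - a - r M)
        filter_upwards [eventually_ge_atTop (j0 + 1)] with k hk
        obtain ⟨j, rfl⟩ : ∃ j, k = j + 1 := ⟨k - 1, by omega⟩
        rw [key j, hIr, ← EReal.coe_add, EReal.coe_lt_coe_iff]
        have hj : (j : ℝ) ≥ (j0 : ℝ) := by
          have : j0 ≤ j := by omega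
          exact_mod_cast this
        have hrb := hrle (M + j) (by omega)
        push_cast at hrb
        linarith
    have : μ (As M) = ⊤ := tendsto_nhds_unique hts htop
    have hcon := hAsM M le_rfl
    rw [this] at hcon
    exact absurd hcon (by simp)

/-- Disjointification of a monotone sequence inside the δ-ring, with union `⋃ F`. -/
lemma jd_disjointify {F : ℕ → Set X} (hFmem : ∀ n, F n ∈ ℛ) (hFmono : ∀ n, F n ⊆ F (n+1)) :
    ∃ H : ℕ → Set X, (∀ n, H n ∈ ℛ) ∧ (H 0 = F 0) ∧ (∀ k, H (k+1) = F (k+1) \ F k) ∧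
      Pairwise (Function.onFun Disjoint H) ∧ (⋃ n, H n) = ⋃ n, F n := by
  classical
  have hFm : ∀ {i j}, i ≤ j → F i ⊆ F j := by
    intro i j hij
    exact monotone_nat_of_le_succ hFmono hij
  refine ⟨fun k => Nat.casesOn k (F 0) (fun j => F (j+1) \ F j), ?_, rfl, fun k => rfl, ?_, ?_⟩
  · intro n; rcases n with _ | n
    · exact hFmem 0
    · exact hℛ.diff_mem (hFmem (n+1)) (hFmem n)
  · have key : ∀ i j, i < j →
        Disjoint (Nat.casesOn i (F 0) (fun j => F (j+1) \ F j) : Set X)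
          (Nat.casesOn j (F 0) (fun j => F (j+1) \ F j) : Set X) := by
      intro i j hij
      obtain ⟨m, rfl⟩ : ∃ m, j = m + 1 := ⟨j - 1, by omega⟩
      rw [Set.disjoint_left]
      intro x hxi hxj
      apply hxj.2
      rcases i with _ | i
      · exact hFm (Nat.zero_le m) hxi
      · exact hFm (by omega : i + 1 ≤ m) hxi.1
    intro i j hij
    rcases lt_or_gt_of_ne hij with h | h
    · exact key i j h
    · exact (key j i h).symm
  · apply Set.Subset.antisymm
    · apply Set.iUnion_subset
      intro k
      rcases k with _ | k
      · exact Set.subset_iUnion F 0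
      · exact diff_subset.trans (Set.subset_iUnion F (k+1))
    · intro x hx
      obtain ⟨n, hn⟩ := Set.mem_iUnion.1 hx
      have hex : ∃ m, x ∈ F m := ⟨n, hn⟩
      set n0 := Nat.find hex with hn0
      have hx0 : x ∈ F n0 := Nat.find_spec hex
      rcases n0.eq_zero_or_eq_succ_pred with h0 | hsucc
      · exact Set.mem_iUnion.2 ⟨0, by rwa [h0] at hx0⟩
      · refine Set.mem_iUnion.2 ⟨n0, ?_⟩
        rw [hsucc] at hx0 ⊢
        exact ⟨hx0, Nat.find_min hex (by omega)⟩

lemma jd_hahn (hbot : ∀ A ∈ ℛ, μ A ≠ ⊥) {A : Set X} (hA : A ∈ ℛ) :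
    ∃ E, E ∈ ℛ ∧ E ⊆ A ∧ (∀ C ∈ ℛ, C ⊆ E → 0 ≤ μ C) ∧
      (∀ C ∈ ℛ, C ⊆ A \ E → μ C ≤ 0) := by
  classical
  have hnb := jd_bounded hℛ hμ0 hadd hbot hA
  rw [Unb] at hnb
  push_neg at hnb
  obtain ⟨r0, hlow⟩ := hnb
  -- the infimum of real values of μ on subsets of A
  set T : Set ℝ := {t : ℝ | ∃ B, B ∈ ℛ ∧ B ⊆ A ∧ μ B = (t : EReal)} with hT
  have hT0 : (0 : ℝ) ∈ T := ⟨∅, dr_empty hℛ, empty_subset A, by rw [hμ0]; rfl⟩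
  have hTne : T.Nonempty := ⟨0, hT0⟩
  have hTbdd : BddBelow T := by
    refine ⟨r0, ?_⟩
    rintro t ⟨B, hBm, hBA, hBt⟩
    have := hlow B hBm hBA
    rw [hBt] at this
    exact EReal.coe_le_coe_iff.1 this
  set s := sInf T with hs
  have hs_le : ∀ B, B ∈ ℛ → B ⊆ A → (s : EReal) ≤ μ B := by
    intro B hBm hBA
    rcases eq_or_ne (μ B) ⊤ with h | h
    · rw [h]; exact le_top
    · have hBr : μ B = (((μ B).toReal : ℝ) : EReal) := (EReal.coe_toReal h (hbot _ hBm)).symm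
      rw [hBr]
      exact EReal.coe_le_coe_iff.2 (csInf_le hTbdd ⟨B, hBm, hBA, hBr⟩)
  set ε : ℕ → ℝ := fun n => (1/2 : ℝ)^n with hε
  have hεpos : ∀ n, 0 < ε n := fun n => pow_pos (by norm_num) n
  have hBex : ∀ n : ℕ, ∃ B, B ∈ ℛ ∧ B ⊆ A ∧ μ B < ((s + ε n : ℝ) : EReal) := by
    intro n
    obtain ⟨t, htT, htlt⟩ := Real.lt_sInf_add_pos hTne (hεpos n)
    obtain ⟨B, hBm, hBA, hBt⟩ := htT
    exact ⟨B, hBm, hBA, by rw [hBt]; exact EReal.coe_lt_coe_iff.2 htlt⟩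
  choose Bs hBmem hBsub hBlt using hBex
  -- key estimates
  have key1 : ∀ n, ∀ C, C ∈ ℛ → C ⊆ Bs n → μ C ≤ ((ε n : ℝ) : EReal) := by
    intro n C hCm hCs
    have e := mu_diff hℛ hμ0 hadd (hBmem n) hCm hCs
    have hlo : (s : EReal) ≤ μ (Bs n \ C) :=
      hs_le _ (hℛ.diff_mem (hBmem n) hCm) (diff_subset.trans (hBsub n))
    have hCt : μ C ≠ ⊤ := by
      intro h
      rw [h, EReal.top_add_of_ne_bot] at e
      · have hblt := hBlt n
        rw [e] at hblt
        exact absurd hblt (by simp)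
      · intro hb
        rw [hb, EReal.add_bot] at e
        exact hbot _ (hBmem n) (by rw [e])
    rcases eq_or_ne (μ C) ⊥ with h | h
    · rw [h]; exact bot_le
    · rw [← EReal.coe_toReal hCt h]
      set t := (μ C).toReal
      have e2 : ((t : ℝ) : EReal) + μ (Bs n \ C) < ((s + ε n : ℝ) : EReal) := by
        rw [← EReal.coe_toReal hCt h] at e
        rw [← e]; exact hBlt n
      have e3 : ((t : ℝ) : EReal) + (s : EReal) < ((s + ε n : ℝ) : EReal) :=
        lt_of_le_of_lt (add_le_add_right hlo _) e2
      rw [← EReal.coe_add, EReal.coe_lt_coe_iff] at e3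
      exact EReal.coe_le_coe_iff.2 (by linarith)
  have key2 : ∀ n, ∀ C, C ∈ ℛ → C ⊆ A \ Bs n → (((-(ε n) : ℝ)) : EReal) ≤ μ C := by
    intro n C hCm hCs
    have hdisj : Disjoint (Bs n) C := by
      rw [Set.disjoint_left]; intro x hx hxC
      exact (hCs hxC).2 hx
    have e : μ (Bs n ∪ C) = μ (Bs n) + μ C := mu_add hℛ hμ0 hadd (hBmem n) hCm hdisj
    have hcup : (s : EReal) ≤ μ (Bs n) + μ C := by
      rw [← e]
      exact hs_le _ (hℛ.union_mem (hBmem n) hCm)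
        (Set.union_subset (hBsub n) (hCs.trans diff_subset))
    rcases eq_or_ne (μ C) ⊤ with h | h
    · rw [h]; exact le_top
    · have hBt : μ (Bs n) ≠ ⊤ := fun hh => by
        have := hBlt n; rw [hh] at this; exact absurd this (by simp)
      have hBb : μ (Bs n) ≠ ⊥ := hbot _ (hBmem n)
      have hCb : μ C ≠ ⊥ := hbot _ hCm
      rw [← EReal.coe_toReal h hCb]
      rw [← EReal.coe_toReal hBt hBb, ← EReal.coe_toReal h hCb, ← EReal.coe_add,
        EReal.coe_le_coe_iff] at hcup
      have hblt : (μ (Bs n)).toReal < s + ε n := by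
        have := hBlt n
        rw [← EReal.coe_toReal hBt hBb, EReal.coe_lt_coe_iff] at this
        exact this
      exact EReal.coe_le_coe_iff.2 (by linarith)
  -- the candidate negative set
  set D : ℕ → Set X := fun n => ⋂ k, Bs (n + k) with hD
  have hDmem : ∀ n, D n ∈ ℛ := fun n => hℛ.iInter_mem _ (fun k => hBmem (n + k))
  have hDsub : ∀ n k, D n ⊆ Bs (n + k) := fun n k => Set.iInter_subset _ k
  have hDsubA : ∀ n, D n ⊆ A := fun n => (hDsub n 0).trans (hBsub (n + 0))
  have hDmono : ∀ n, D n ⊆ D (n+1) := by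
    intro n x hx
    apply Set.mem_iInter.2
    intro k
    have := Set.mem_iInter.1 hx (k + 1)
    rwa [show n + (k+1) = n + 1 + k by omega] at this
  set N := ⋃ n, D n with hN
  have hNmem : N ∈ ℛ := dr_iUnion hℛ hDmem hDsubA hA
  have hNsubA : N ⊆ A := Set.iUnion_subset hDsubA
  refine ⟨A \ N, hℛ.diff_mem hA hNmem, diff_subset, ?_, ?_⟩
  · -- nonnegative on subsets of A \ N
    intro C hCm hCs
    apply ereal_nonneg
    intro e he
    obtain ⟨n, hn⟩ := exists_pow_lt_of_lt_one (show (0:ℝ) < e/2 by linarith)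
      (show (1/2 : ℝ) < 1 by norm_num)
    -- cover C by the complements of Bs (n+k)
    set K : ℕ → Set X := fun k => C ∩ (A \ Bs (n + k)) with hK
    have hKmem : ∀ k, K k ∈ ℛ := fun k =>
      dr_inter hℛ hCm (hℛ.diff_mem hA (hBmem (n+k)))
    set P : ℕ → Set X := fun k => Nat.rec (K 0) (fun k prev => prev ∪ K (k+1)) k with hP
    have hPmem : ∀ k, P k ∈ ℛ := by
      intro k
      induction k with
      | zero => exact hKmem 0
      | succ k ih => exact hℛ.union_mem ih (hKmem (k+1))
    have hPmono : ∀ k, P k ⊆ P (k+1) := fun k => Set.subset_union_left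
    have hKP : ∀ k, K k ⊆ P k := by
      intro k
      rcases k with _ | k
      · exact subset_rfl
      · exact Set.subset_union_right
    have hPsubC : ∀ k, P k ⊆ C := by
      intro k
      induction k with
      | zero => exact Set.inter_subset_left
      | succ k ih => exact Set.union_subset ih Set.inter_subset_left
    have hPK : ∀ k, P k ⊆ ⋃ j, K j := by
      intro k
      induction k with
      | zero => exact Set.subset_iUnion K 0
      | succ k ih => exact Set.union_subset ih (Set.subset_iUnion K (k+1))
    obtain ⟨H, hHmem, hH0, hHsucc, hHdisj, hHU⟩ := jd_disjointify hℛ hμ0 hadd hPmem hPmono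
    have hHUC : (⋃ j, H j) = C := by
      rw [hHU]
      apply Set.Subset.antisymm (Set.iUnion_subset hPsubC)
      intro x hx
      have hxA : x ∈ A \ N := hCs hx
      have hxD : x ∉ D n := fun hc => hxA.2 (Set.mem_iUnion.2 ⟨n, hc⟩)
      have : ∃ k, x ∉ Bs (n + k) := by
        by_contra hc
        push_neg at hc
        exact hxD (Set.mem_iInter.2 hc)
      obtain ⟨k, hk⟩ := this
      exact Set.mem_iUnion.2 ⟨k, hKP k ⟨hx, hxA.1, hk⟩⟩
    have hHK : ∀ k, H k ⊆ K k := by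
      intro k
      rcases k with _ | k
      · rw [hH0]; exact subset_rfl
      · rw [hHsucc k]
        intro x hx
        have h1 : x ∈ P k ∪ K (k+1) := hx.1
        exact h1.resolve_left (fun hc => absurd hc hx.2)
    have hHlow : ∀ k, (((-(ε (n + k)) : ℝ)) : EReal) ≤ μ (H k) :=
      fun k => key2 (n + k) (H k) (hHmem k) ((hHK k).trans Set.inter_subset_right)
    have hsum : HasSum (fun k => μ (H k)) (μ C) := by
      have := hadd H hHmem hHdisj (by rw [hHUC]; exact hCm)
      rwa [hHUC] at this
    have hgeo : HasSum (fun k : ℕ => -(ε (n + k))) (-(ε n * 2)) := by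
      have hg := (hasSum_geometric_of_lt_one (by norm_num) (by norm_num : (1/2:ℝ) < 1)).mul_left
        ((1/2 : ℝ)^n)
      have h1 : (fun k : ℕ => (1/2:ℝ)^n * (1/2:ℝ)^k) = fun k : ℕ => ε (n + k) := by
        funext k
        rw [hε, ← pow_add]
      have h2 : (1/2:ℝ)^n * (1 - 1/2)⁻¹ = ε n * 2 := by
        rw [hε]; norm_num
      rw [h1, h2] at hg
      exact hg.neg
    have hle := hasSum_le hHlow (hasSum_ereal_of_real hgeo) hsum
    refine le_trans ?_ hle
    apply EReal.coe_le_coe_iff.2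
    have : ε n < e / 2 := hn
    nlinarith [hεpos n]
  · -- nonpositive on subsets of A \ (A \ N), i.e. subsets of N
    intro C hCm hCs
    have hCN : C ⊆ N := by
      intro x hx
      have h1 := hCs hx
      by_contra hc
      exact h1.2 ⟨h1.1, hc⟩
    set F : ℕ → Set X := fun k => C ∩ D k with hF
    have hFmem : ∀ k, F k ∈ ℛ := fun k => dr_inter hℛ hCm (hDmem k)
    have hFmono : ∀ k, F k ⊆ F (k+1) := fun k =>
      Set.inter_subset_inter subset_rfl (hDmono k)
    obtain ⟨H, hHmem, hH0, hHsucc, hHdisj, hHU⟩ := jd_disjointify hℛ hμ0 hadd hFmem hFmono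
    have hHUC : (⋃ j, H j) = C := by
      rw [hHU]
      apply Set.Subset.antisymm (Set.iUnion_subset (fun k => Set.inter_subset_left))
      intro x hx
      obtain ⟨k, hk⟩ := Set.mem_iUnion.1 (hCN hx)
      exact Set.mem_iUnion.2 ⟨k, hx, hk⟩
    have hHD : ∀ k, H k ⊆ D k := by
      intro k
      rcases k with _ | k
      · rw [hH0]; exact Set.inter_subset_right
      · rw [hHsucc k]
        exact diff_subset.trans Set.inter_subset_right
    have hHneg : ∀ k, μ (H k) ≤ 0 := by
      intro k
      apply ereal_le_zero
      intro e he
      obtain ⟨m, hm⟩ := exists_pow_lt_of_lt_one he (show (1/2 : ℝ) < 1 by norm_num)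
      have hsubm : H k ⊆ Bs (k + m) := (hHD k).trans (hDsub k m)
      have := key1 (k + m) (H k) (hHmem k) hsubm
      refine le_trans this (EReal.coe_le_coe_iff.2 ?_)
      calc ε (k + m) ≤ ε m := by
            rw [hε]
            exact pow_le_pow_of_le_one (by norm_num) (by norm_num) (by omega)
        _ ≤ e := le_of_lt hm
    have hsum : HasSum (fun k => μ (H k)) (μ C) := by
      have := hadd H hHmem hHdisj (by rw [hHUC]; exact hCm)
      rwa [hHUC] at this
    exact hasSum_le hHneg hsum hasSum_zero


omit hμ0 hadd in
lemma meas_bin_add {q : Set X → ENNReal} (hq : IsMeasureOn ℛ q) {A B : Set X}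
    (hA : A ∈ ℛ) (hB : B ∈ ℛ) (hAB : Disjoint A B) : q (A ∪ B) = q A + q B := by
  classical
  set f : ℕ → Set X := fun n => if n = 0 then A else if n = 1 then B else ∅ with hf
  have hmem : ∀ n, f n ∈ ℛ := by
    intro n; rcases n with _ | _ | n <;> simp [hf, hA, hB, dr_empty hℛ]
  have hdis : Pairwise (Function.onFun Disjoint f) := by
    intro i j hij
    rcases i with _ | _ | i <;> rcases j with _ | _ | j <;>
      simp_all [hf, Function.onFun] <;>
      first
        | exact hAB
        | exact hAB.symm
        | exact Set.disjoint_empty _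
        | exact Set.empty_disjoint _
  have hun : (⋃ n, f n) = A ∪ B := by
    ext x
    simp only [Set.mem_iUnion, Set.mem_union]
    constructor
    · rintro ⟨n, hn⟩
      rcases n with _ | _ | n
      · exact Or.inl hn
      · exact Or.inr hn
      · simp [hf] at hn
    · rintro (h | h)
      exacts [⟨0, by simp [hf, h]⟩, ⟨1, by simp [hf, h]⟩]
  have h1 := hq.2 f hmem hdis (by rw [hun]; exact hℛ.union_mem hA hB)
  rw [hun] at h1
  rw [h1, tsum_eq_sum (s := {0, 1}) ?_, Finset.sum_pair (by norm_num : (0:ℕ) ≠ 1)]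
  · rfl
  · intro n hn
    rcases n with _ | _ | n
    · simp at hn
    · simp at hn
    · simpa [hf] using hq.1

/-- Value of the sup-functionals at a Hahn set. -/
lemma jd_value (hbot : ∀ A ∈ ℛ, μ A ≠ ⊥) {A E : Set X} (hA : A ∈ ℛ) (hE : E ∈ ℛ)
    (hEA : E ⊆ A) (hpos : ∀ C ∈ ℛ, C ⊆ E → 0 ≤ μ C) (hneg : ∀ C ∈ ℛ, C ⊆ A \ E → μ C ≤ 0) :
    (⨆ (B : Set X) (_ : B ∈ ℛ ∧ B ⊆ A), eToENN (μ B)) = eToENN (μ E) ∧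
    (⨆ (B : Set X) (_ : B ∈ ℛ ∧ B ⊆ A), eToENN (-μ B)) = eToENN (-μ (A \ E)) := by
  constructor
  · apply le_antisymm
    · apply iSup₂_le
      rintro B ⟨hBm, hBA⟩
      apply eToENN_mono
      have e1 : μ B = μ (B ∩ E) + μ (B \ E) := by
        have h := mu_diff hℛ hμ0 hadd hBm (dr_inter hℛ hBm hE) Set.inter_subset_left
        rwa [Set.diff_self_inter] at h
      have e2 : μ (B \ E) ≤ 0 :=
        hneg _ (hℛ.diff_mem hBm hE) (fun x hx => ⟨hBA hx.1, hx.2⟩)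
      have e3 : μ E = μ (B ∩ E) + μ (E \ (B ∩ E)) :=
        mu_diff hℛ hμ0 hadd hE (dr_inter hℛ hBm hE) Set.inter_subset_right
      have e4 : 0 ≤ μ (E \ (B ∩ E)) :=
        hpos _ (hℛ.diff_mem hE (dr_inter hℛ hBm hE)) diff_subset
      calc μ B = μ (B ∩ E) + μ (B \ E) := e1
        _ ≤ μ (B ∩ E) + 0 := add_le_add_right e2 _
        _ = μ (B ∩ E) := add_zero _
        _ = μ (B ∩ E) + 0 := (add_zero _).symm
        _ ≤ μ (B ∩ E) + μ (E \ (B ∩ E)) := add_le_add_right e4 _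
        _ = μ E := e3.symm
    · exact le_iSup₂ (f := fun (B : Set X) (_ : B ∈ ℛ ∧ B ⊆ A) => eToENN (μ B)) E ⟨hE, hEA⟩
  · apply le_antisymm
    · apply iSup₂_le
      rintro B ⟨hBm, hBA⟩
      apply eToENN_mono
      rw [EReal.neg_le_neg_iff]
      have hBAE : B \ (A \ E) ⊆ E := by
        intro x hx
        by_contra hc
        exact hx.2 ⟨hBA hx.1, hc⟩
      have e1 : μ B = μ (B ∩ (A \ E)) + μ (B \ (A \ E)) := by
        have h := mu_diff hℛ hμ0 hadd hBm (dr_inter hℛ hBm (hℛ.diff_mem hA hE))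
          Set.inter_subset_left
        rwa [Set.diff_self_inter] at h
      have e2 : 0 ≤ μ (B \ (A \ E)) :=
        hpos _ (hℛ.diff_mem hBm (hℛ.diff_mem hA hE)) hBAE
      have e3 : μ (A \ E) = μ (B ∩ (A \ E)) + μ ((A \ E) \ (B ∩ (A \ E))) :=
        mu_diff hℛ hμ0 hadd (hℛ.diff_mem hA hE) (dr_inter hℛ hBm (hℛ.diff_mem hA hE))
          Set.inter_subset_right
      have e4 : μ ((A \ E) \ (B ∩ (A \ E))) ≤ 0 :=
        hneg _ (hℛ.diff_mem (hℛ.diff_mem hA hE) (dr_inter hℛ hBm (hℛ.diff_mem hA hE)))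
          diff_subset
      calc μ (A \ E) = μ (B ∩ (A \ E)) + μ ((A \ E) \ (B ∩ (A \ E))) := e3
        _ ≤ μ (B ∩ (A \ E)) + 0 := add_le_add_right e4 _
        _ = μ (B ∩ (A \ E)) := add_zero _
        _ = μ (B ∩ (A \ E)) + 0 := (add_zero _).symm
        _ ≤ μ (B ∩ (A \ E)) + μ (B \ (A \ E)) := add_le_add_right e2 _
        _ = μ B := e1.symm
    · exact le_iSup₂ (f := fun (B : Set X) (_ : B ∈ ℛ ∧ B ⊆ A) => eToENN (-μ B)) (A \ E)
        ⟨hℛ.diff_mem hA hE, diff_subset⟩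

lemma jd_exists (hbot : ∀ A ∈ ℛ, μ A ≠ ⊥) :
    ∃ p m : Set X → ENNReal, IsJordanPairOn ℛ μ p m ∧ ∀ A ∈ ℛ, m A ≠ ⊤ := by
  classical
  set p : Set X → ENNReal :=
    fun A => ⨆ (B : Set X) (_ : B ∈ ℛ ∧ B ⊆ A), eToENN (μ B) with hp
  set m : Set X → ENNReal :=
    fun A => ⨆ (B : Set X) (_ : B ∈ ℛ ∧ B ⊆ A), eToENN (-μ B) with hm
  have hemptyHahn : ∀ C ∈ ℛ, C ⊆ (∅ : Set X) → (0:EReal) ≤ μ C := by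
    intro C _ hC
    rw [Set.subset_empty_iff.1 hC, hμ0]
  have hp0 : p ∅ = 0 := by
    have := (jd_value hℛ hμ0 hadd hbot (dr_empty hℛ) (dr_empty hℛ) subset_rfl hemptyHahn
      (fun C hC hCs => by rw [Set.subset_empty_iff.1 (hCs.trans diff_subset), hμ0])).1
    show (⨆ (B : Set X) (_ : B ∈ ℛ ∧ B ⊆ (∅ : Set X)), eToENN (μ B)) = 0
    rw [this, hμ0, eToENN_zero]
  have hm0 : m ∅ = 0 := by
    have := (jd_value hℛ hμ0 hadd hbot (dr_empty hℛ) (dr_empty hℛ) subset_rfl hemptyHahn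
      (fun C hC hCs => by rw [Set.subset_empty_iff.1 (hCs.trans diff_subset), hμ0])).2
    show (⨆ (B : Set X) (_ : B ∈ ℛ ∧ B ⊆ (∅ : Set X)), eToENN (-μ B)) = 0
    rw [this, Set.empty_diff, hμ0, neg_zero, eToENN_zero]
  -- countable additivity
  have hcadd : ∀ As : ℕ → Set X, (∀ n, As n ∈ ℛ) → Pairwise (Function.onFun Disjoint As) →
      (⋃ n, As n) ∈ ℛ → p (⋃ n, As n) = ∑' n, p (As n) ∧ m (⋃ n, As n) = ∑' n, m (As n) := by
    intro As hmem hdisj hU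
    have hhahn := fun n => jd_hahn hℛ hμ0 hadd hbot (hmem n)
    choose E hEmem hEsub hEpos hEneg using hhahn
    have hEsubU : ∀ n, E n ⊆ ⋃ k, As k := fun n => (hEsub n).trans (Set.subset_iUnion As n)
    have hEU : (⋃ n, E n) ∈ ℛ := dr_iUnion hℛ hEmem hEsubU hU
    have hEdisj : Pairwise (Function.onFun Disjoint E) :=
      fun i j hij => ((hdisj hij).mono (hEsub i) (hEsub j))
    -- ⋃ E is a Hahn set for ⋃ As
    have hposU : ∀ C ∈ ℛ, C ⊆ (⋃ n, E n) → 0 ≤ μ C := by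
      intro C hCm hCs
      have hpieces : ∀ n, C ∩ E n ∈ ℛ := fun n => dr_inter hℛ hCm (hEmem n)
      have hdisj2 : Pairwise (Function.onFun Disjoint (fun n => C ∩ E n)) :=
        fun i j hij => ((hEdisj hij).mono Set.inter_subset_right Set.inter_subset_right)
      have hCU : (⋃ n, C ∩ E n) = C := by
        rw [← Set.inter_iUnion]
        exact Set.inter_eq_left.2 hCs
      have hsum := hadd _ hpieces hdisj2 (by rw [hCU]; exact hCm)
      rw [hCU] at hsum
      exact hasSum_le (fun n => hEpos n _ (hpieces n) (Set.inter_subset_right.trans subset_rfl))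
        hasSum_zero hsum
    have hnegU : ∀ C ∈ ℛ, C ⊆ (⋃ n, As n) \ (⋃ n, E n) → μ C ≤ 0 := by
      intro C hCm hCs
      have hpieces : ∀ n, C ∩ As n ∈ ℛ := fun n => dr_inter hℛ hCm (hmem n)
      have hdisj2 : Pairwise (Function.onFun Disjoint (fun n => C ∩ As n)) :=
        fun i j hij => ((hdisj hij).mono Set.inter_subset_right Set.inter_subset_right)
      have hCU : (⋃ n, C ∩ As n) = C := by
        rw [← Set.inter_iUnion]
        exact Set.inter_eq_left.2 (fun x hx => (hCs hx).1)
      have hsum := hadd _ hpieces hdisj2 (by rw [hCU]; exact hCm)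
      rw [hCU] at hsum
      refine hasSum_le (fun n => hEneg n _ (hpieces n) ?_) hsum hasSum_zero
      intro x hx
      exact ⟨hx.2, fun hc => (hCs hx.1).2 (Set.mem_iUnion.2 ⟨n, hc⟩)⟩
    have hval := jd_value hℛ hμ0 hadd hbot hU hEU (Set.iUnion_subset hEsubU) hposU hnegU
    constructor
    · -- positive parts
      have hsumE := hadd E hEmem hEdisj hEU
      have h1 : ∑' n, eToENN (μ (E n)) = eToENN (μ (⋃ n, E n)) :=
        hasSum_nonneg_toENN (fun n => hEpos n _ (hEmem n) subset_rfl) hsumE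
      have h2 : ∀ n, p (As n) = eToENN (μ (E n)) := by
        intro n
        exact (jd_value hℛ hμ0 hadd hbot (hmem n) (hEmem n) (hEsub n) (hEpos n) (hEneg n)).1
      rw [hp]
      show (⨆ (B : Set X) (_ : B ∈ ℛ ∧ B ⊆ ⋃ n, As n), eToENN (μ B)) = _
      rw [hval.1, ← h1]
      exact tsum_congr (fun n => (h2 n).symm)
    · -- negative parts
      have hdiffU : (⋃ n, As n) \ (⋃ n, E n) = ⋃ n, (As n \ E n) := by
        ext x
        simp only [Set.mem_diff, Set.mem_iUnion, not_exists]
        constructor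
        · rintro ⟨⟨n, hn⟩, hne⟩
          exact ⟨n, hn, hne n⟩
        · rintro ⟨n, hn, hne⟩
          refine ⟨⟨n, hn⟩, fun k hk => ?_⟩
          rcases eq_or_ne k n with rfl | hkn
          · exact hne hk
          · exact Set.disjoint_left.1 (hdisj hkn) (hEsub k hk) hn
      have hpieces : ∀ n, As n \ E n ∈ ℛ := fun n => hℛ.diff_mem (hmem n) (hEmem n)
      have hdisj2 : Pairwise (Function.onFun Disjoint (fun n => As n \ E n)) :=
        fun i j hij => ((hdisj hij).mono diff_subset diff_subset)
      have hmemD : (⋃ n, As n \ E n) ∈ ℛ := by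
        rw [← hdiffU]; exact hℛ.diff_mem hU hEU
      have hsumD := hadd _ hpieces hdisj2 hmemD
      rw [← hdiffU] at hsumD
      have h1 : ∑' n, eToENN (-μ (As n \ E n)) = eToENN (-μ ((⋃ n, As n) \ ⋃ n, E n)) :=
        hasSum_nonpos_toENN (fun n => hEneg n _ (hpieces n) subset_rfl)
          (fun n => hbot _ (hpieces n)) (hbot _ (hℛ.diff_mem hU hEU)) hsumD
      have h2 : ∀ n, m (As n) = eToENN (-μ (As n \ E n)) := by
        intro n
        exact (jd_value hℛ hμ0 hadd hbot (hmem n) (hEmem n) (hEsub n) (hEpos n) (hEneg n)).2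
      rw [hm]
      show (⨆ (B : Set X) (_ : B ∈ ℛ ∧ B ⊆ ⋃ n, As n), eToENN (-μ B)) = _
      rw [hval.2, ← h1]
      exact tsum_congr (fun n => (h2 n).symm)
  refine ⟨p, m, ⟨⟨hp0, fun As h1 h2 h3 => (hcadd As h1 h2 h3).1⟩,
    ⟨hm0, fun As h1 h2 h3 => (hcadd As h1 h2 h3).2⟩, ?_, ?_⟩, ?_⟩
  · -- μ = p - m
    intro A hA
    obtain ⟨E, hEm, hEA, hpos, hneg⟩ := jd_hahn hℛ hμ0 hadd hbot hA
    have hval := jd_value hℛ hμ0 hadd hbot hA hEm hEA hpos hneg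
    have hpc : ((p A : ENNReal) : EReal) = μ E := by
      rw [hp]
      show (((⨆ (B : Set X) (_ : B ∈ ℛ ∧ B ⊆ A), eToENN (μ B)) : ENNReal) : EReal) = μ E
      rw [hval.1]
      exact coe_eToENN (hpos E hEm subset_rfl)
    have hmc : ((m A : ENNReal) : EReal) = -μ (A \ E) := by
      rw [hm]
      show (((⨆ (B : Set X) (_ : B ∈ ℛ ∧ B ⊆ A), eToENN (-μ B)) : ENNReal) : EReal) = -μ (A \ E)
      rw [hval.2]
      refine coe_eToENN ?_
      have h := hneg _ (hℛ.diff_mem hA hEm) subset_rfl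
      have h2 := EReal.neg_le_neg_iff.2 h
      rwa [neg_zero] at h2
    rw [hpc, hmc, sub_eq_add_neg, neg_neg]
    exact mu_diff hℛ hμ0 hadd hA hEm hEA
  · -- mutual singularity
    intro A hA
    obtain ⟨E, hEm, hEA, hpos, hneg⟩ := jd_hahn hℛ hμ0 hadd hbot hA
    refine ⟨E, hEm, hEA, ?_, ?_⟩
    · intro B hBm hBs
      rw [hp]
      show (⨆ (C : Set X) (_ : C ∈ ℛ ∧ C ⊆ B), eToENN (μ C)) = 0
      apply le_antisymm _ zero_le
      apply iSup₂_le
      rintro C ⟨hCm, hCB⟩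
      rw [eToENN_of_nonpos (hneg C hCm (hCB.trans hBs))]
    · intro B hBm hBs
      rw [hm]
      show (⨆ (C : Set X) (_ : C ∈ ℛ ∧ C ⊆ B), eToENN (-μ C)) = 0
      apply le_antisymm _ zero_le
      apply iSup₂_le
      rintro C ⟨hCm, hCB⟩
      have := hpos C hCm (hCB.trans hBs)
      refine le_of_eq (eToENN_of_nonpos ?_)
      rw [EReal.neg_le, neg_zero]
      exact this
  · -- m is finite
    intro A hA
    obtain ⟨E, hEm, hEA, hpos, hneg⟩ := jd_hahn hℛ hμ0 hadd hbot hA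
    have hval := jd_value hℛ hμ0 hadd hbot hA hEm hEA hpos hneg
    rw [hm]
    show (⨆ (B : Set X) (_ : B ∈ ℛ ∧ B ⊆ A), eToENN (-μ B)) ≠ ⊤
    rw [hval.2]
    exact eToENN_ne_top (by
      intro hc
      have : μ (A \ E) = ⊥ := by
        rw [← neg_neg (μ (A \ E)), hc]; rfl
      exact hbot _ (hℛ.diff_mem hA hEm) this)

lemma jd_unique {p m p' m' : Set X → ENNReal}
    (h1 : IsJordanPairOn ℛ μ p m) (h2 : IsJordanPairOn ℛ μ p' m') :
    ∀ A ∈ ℛ, p' A = p A ∧ m' A = m A := by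
  intro A hA
  obtain ⟨E, hEm, hEA, hpE, hmE⟩ := h1.2.2.2 A hA
  obtain ⟨E', hEm', hEA', hpE', hmE'⟩ := h2.2.2.2 A hA
  have sub0 : ∀ x : EReal, x - ((0 : ENNReal) : EReal) = x := by
    intro x
    rw [EReal.coe_ennreal_zero, sub_eq_add_neg, neg_zero, add_zero]
  have zsub : ∀ y : ENNReal, ((0 : ENNReal) : EReal) - (y : EReal) = -(y : EReal) := by
    intro y
    rw [EReal.coe_ennreal_zero, sub_eq_add_neg, zero_add]
  -- generic facts for a Jordan pair and its singular set
  have main : ∀ (q w : Set X → ENNReal) (F : Set X), IsJordanPairOn ℛ μ q w →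
      F ∈ ℛ → F ⊆ A → (∀ B ∈ ℛ, B ⊆ A \ F → q B = 0) → (∀ B ∈ ℛ, B ⊆ F → w B = 0) →
      (((q A : ENNReal) : EReal) = μ F ∧ ((w A : ENNReal) : EReal) = -μ (A \ F)) ∧
      (∀ C ∈ ℛ, C ⊆ F → 0 ≤ μ C) ∧ (∀ C ∈ ℛ, C ⊆ A \ F → μ C ≤ 0) := by
    intro q w F hqw hFm hFA hq0 hw0
    have hAFm : A \ F ∈ ℛ := hℛ.diff_mem hA hFm
    have hsp : ∀ C ∈ ℛ, C ⊆ F → 0 ≤ μ C := by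
      intro C hCm hCs
      rw [hqw.2.2.1 C hCm, hw0 C hCm hCs, sub0]
      exact EReal.coe_ennreal_nonneg _
    have hsn : ∀ C ∈ ℛ, C ⊆ A \ F → μ C ≤ 0 := by
      intro C hCm hCs
      rw [hqw.2.2.1 C hCm, hq0 C hCm hCs, zsub]
      have : -((w C : ENNReal) : EReal) ≤ -0 := EReal.neg_le_neg_iff.2 (EReal.coe_ennreal_nonneg _)
      rwa [neg_zero] at this
    have hqA : q A = q F := by
      have hsplit : q A = q F + q (A \ F) := by
        have := meas_bin_add hℛ hqw.1 hFm hAFm disjoint_sdiff_right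
        rwa [Set.union_diff_cancel hFA] at this
      rw [hsplit, hq0 _ hAFm subset_rfl, add_zero]
    have hwA : w A = w (A \ F) := by
      have hsplit : w A = w F + w (A \ F) := by
        have := meas_bin_add hℛ hqw.2.1 hFm hAFm disjoint_sdiff_right
        rwa [Set.union_diff_cancel hFA] at this
      rw [hsplit, hw0 _ hFm subset_rfl, zero_add]
    refine ⟨⟨?_, ?_⟩, hsp, hsn⟩
    · rw [hqA, hqw.2.2.1 F hFm, hw0 F hFm subset_rfl, sub0]
    · rw [hwA]
      have := hqw.2.2.1 (A \ F) hAFm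
      rw [hq0 _ hAFm subset_rfl, zsub] at this
      rw [this, neg_neg]
  obtain ⟨⟨hqA, hwA⟩, hApos, hAneg⟩ := main p m E h1 hEm hEA hpE hmE
  obtain ⟨⟨hqA', hwA'⟩, hApos', hAneg'⟩ := main p' m' E' h2 hEm' hEA' hpE' hmE'
  have hz1 : μ (E \ E') = 0 :=
    le_antisymm (hAneg' _ (hℛ.diff_mem hEm hEm') (fun x hx => ⟨hEA hx.1, hx.2⟩))
      (hApos _ (hℛ.diff_mem hEm hEm') diff_subset)
  have hz2 : μ (E' \ E) = 0 :=
    le_antisymm (hAneg _ (hℛ.diff_mem hEm' hEm) (fun x hx => ⟨hEA' hx.1, hx.2⟩))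
      (hApos' _ (hℛ.diff_mem hEm' hEm) diff_subset)
  have hE_eq : μ E = μ E' := by
    have e1 : μ E = μ (E ∩ E') + μ (E \ E') := by
      have := mu_diff hℛ hμ0 hadd hEm (dr_inter hℛ hEm hEm') Set.inter_subset_left
      rwa [Set.diff_self_inter] at this
    have e2 : μ E' = μ (E' ∩ E) + μ (E' \ E) := by
      have := mu_diff hℛ hμ0 hadd hEm' (dr_inter hℛ hEm' hEm) Set.inter_subset_left
      rwa [Set.diff_self_inter] at this
    rw [e1, e2, hz1, hz2, add_zero, add_zero, Set.inter_comm]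
  have hz3 : μ ((A \ E) \ (A \ E')) = 0 := by
    refine le_antisymm (hAneg _ (hℛ.diff_mem (hℛ.diff_mem hA hEm) (hℛ.diff_mem hA hEm'))
      (fun x hx => hx.1)) (hApos' _ (hℛ.diff_mem (hℛ.diff_mem hA hEm) (hℛ.diff_mem hA hEm')) ?_)
    intro x hx
    by_contra hc
    exact hx.2 ⟨hx.1.1, hc⟩
  have hz4 : μ ((A \ E') \ (A \ E)) = 0 := by
    refine le_antisymm (hAneg' _ (hℛ.diff_mem (hℛ.diff_mem hA hEm') (hℛ.diff_mem hA hEm))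
      (fun x hx => hx.1)) (hApos _ (hℛ.diff_mem (hℛ.diff_mem hA hEm') (hℛ.diff_mem hA hEm)) ?_)
    intro x hx
    by_contra hc
    exact hx.2 ⟨hx.1.1, hc⟩
  have hAE_eq : μ (A \ E) = μ (A \ E') := by
    have e1 : μ (A \ E) = μ ((A \ E) ∩ (A \ E')) + μ ((A \ E) \ (A \ E')) := by
      have := mu_diff hℛ hμ0 hadd (hℛ.diff_mem hA hEm)
        (dr_inter hℛ (hℛ.diff_mem hA hEm) (hℛ.diff_mem hA hEm')) Set.inter_subset_left
      rwa [Set.diff_self_inter] at this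
    have e2 : μ (A \ E') = μ ((A \ E') ∩ (A \ E)) + μ ((A \ E') \ (A \ E)) := by
      have := mu_diff hℛ hμ0 hadd (hℛ.diff_mem hA hEm')
        (dr_inter hℛ (hℛ.diff_mem hA hEm') (hℛ.diff_mem hA hEm)) Set.inter_subset_left
      rwa [Set.diff_self_inter] at this
    rw [e1, e2, hz3, hz4, add_zero, add_zero, Set.inter_comm]
  constructor
  · apply EReal.coe_ennreal_injective
    rw [hqA', hqA, hE_eq]
  · apply EReal.coe_ennreal_injective
    apply neg_injective
    rw [hwA', hwA, hAE_eq]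


end main

/-- Let `X` be a nonempty set, `ℛ` a δ-ring on `X`, and `μ` an extended
signed measure on `ℛ` (vanishing at `∅`, not attaining both `+∞` and `-∞`, and σ-additive
with unconditional convergence on disjoint sequences whose union lies in `ℛ`). Then there
exist two measures `μ⁺, μ⁻` on `ℛ` with `μ = μ⁺ - μ⁻` on `ℛ`, mutually singular on the
trace σ-algebra of every `A ∈ ℛ`, and they are unique as set functions on `ℛ`. -/
theorem jordan_decomposition_on_deltaRing {X : Type*} [Nonempty X]
    (ℛ : Set (Set X)) (hℛ : IsDeltaRing ℛ) (μ : Set X → EReal)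
    (hμ0 : μ ∅ = 0)
    (hnotboth : ¬ ((∃ A ∈ ℛ, μ A = ⊤) ∧ (∃ A ∈ ℛ, μ A = ⊥)))
    (hadd : ∀ A : ℕ → Set X, (∀ n, A n ∈ ℛ) → Pairwise (Function.onFun Disjoint A) →
      (⋃ n, A n) ∈ ℛ → HasSum (fun n => μ (A n)) (μ (⋃ n, A n))) :
    ∃ p m : Set X → ENNReal, IsJordanPairOn ℛ μ p m ∧
      ∀ p' m' : Set X → ENNReal, IsJordanPairOn ℛ μ p' m' →
        ∀ A ∈ ℛ, p' A = p A ∧ m' A = m A := by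
  have hcase : (∀ A ∈ ℛ, μ A ≠ ⊥) ∨ (∀ A ∈ ℛ, μ A ≠ ⊤) := by
    by_contra h
    push_neg at h
    obtain ⟨⟨A1, hA1, hA1b⟩, ⟨A2, hA2, hA2t⟩⟩ := h
    exact hnotboth ⟨⟨A2, hA2, hA2t⟩, ⟨A1, hA1, hA1b⟩⟩
  rcases hcase with hbot | htop
  · obtain ⟨p, m, hpm, -⟩ := jd_exists hℛ hμ0 hadd hbot
    exact ⟨p, m, hpm, fun p' m' hpm' => jd_unique hℛ hμ0 hadd hpm hpm'⟩
  · -- apply the construction to ν = -μ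
    set ν : Set X → EReal := fun A => -(μ A) with hν
    have hν0 : ν ∅ = 0 := by rw [hν]; simp [hμ0]
    have hνbot : ∀ A ∈ ℛ, ν A ≠ ⊥ := by
      intro A hA hc
      apply htop A hA
      have : μ A = -(ν A) := by rw [hν]; simp
      rw [this, hc]
      rfl
    have hνadd : ∀ A : ℕ → Set X, (∀ n, A n ∈ ℛ) → Pairwise (Function.onFun Disjoint A) →
        (⋃ n, A n) ∈ ℛ → HasSum (fun n => ν (A n)) (ν (⋃ n, A n)) := by
      intro As hmem hdisj hU
      have hT : Tendsto (fun t : Finset ℕ => ∑ i ∈ t, μ (As i)) atTop (𝓝 (μ (⋃ n, As n))) :=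
        hadd As hmem hdisj hU
      have h := hT.neg
      have heq : ∀ t : Finset ℕ, ∑ i ∈ t, ν (As i) = -∑ i ∈ t, μ (As i) :=
        fun t => (ereal_neg_sum t (fun i => μ (As i)) (fun i _ => htop _ (hmem i))).2
      show Tendsto (fun t : Finset ℕ => ∑ i ∈ t, ν (As i)) atTop (𝓝 (ν (⋃ n, As n)))
      simp only [heq]
      exact h
    obtain ⟨p, m, hpm, hmtop⟩ := jd_exists hℛ hν0 hνadd hνbot
    have hswap : IsJordanPairOn ℛ μ m p := by
      refine ⟨hpm.2.1, hpm.1, ?_, ?_⟩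
      · intro A hA
        have h1 := hpm.2.2.1 A hA
        have h2 : μ A = -(ν A) := by rw [hν]; simp
        rw [h2, h1]
        exact ereal_swap_sub (hmtop A hA)
      · intro A hA
        obtain ⟨E, hEm, hEA, hp0, hm0⟩ := hpm.2.2.2 A hA
        refine ⟨A \ E, hℛ.diff_mem hA hEm, diff_subset, ?_, ?_⟩
        · intro B hBm hBs
          rw [Set.diff_diff_cancel_left hEA] at hBs
          exact hm0 B hBm hBs
        · intro B hBm hBs
          exact hp0 B hBm hBs
    exact ⟨m, p, hswap, fun p' m' hpm' => jd_unique hℛ hμ0 hadd hswap hpm'⟩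
end

section
/- Let X be an arbitrary nonempty set, ℛ a δ-ring on X, and μ a σ-finite extended signed measure on ℛ, i.e. a σ-additive μ : ℛ → [−∞,∞] with μ(∅) = 0 for which there exists a sequence S₁, S₂, … ∈ ℛ with X = ⋃ₙ Sₙ and −∞ < μ(Sₙ) < ∞ for every n. Let μ⁺ and μ⁻ be the unique Jordan decomposition measures of μ on ℛ (so μ = μ⁺ − μ⁻ on ℛ, with μ⁺ and μ⁻ mutually singular on every A ∈ ℛ). Then μ⁺ and μ⁻ each extend uniquely to σ-finite measures on the σ-algebra σ(ℛ). -/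
open MeasureTheory Set Filter Topology

lemma IsDeltaRing.isSetRing {X : Type*} {ℛ : Set (Set X)} (hℛ : IsDeltaRing ℛ) :
    IsSetRing ℛ := by
  obtain ⟨A, hA⟩ := hℛ.nonempty
  exact ⟨by simpa using hℛ.diff_mem hA hA, hℛ.union_mem, hℛ.diff_mem⟩

lemma IsMeasureOn.add_of_disjoint {X : Type*} {ℛ : Set (Set X)} (hℛ : IsDeltaRing ℛ)
    {p : Set X → ENNReal} (hp : IsMeasureOn ℛ p) {A B : Set X}
    (hA : A ∈ ℛ) (hB : B ∈ ℛ) (hAB : Disjoint A B) :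
    p (A ∪ B) = p A + p B := by
  classical
  set f : ℕ → Set X := fun n => if n = 0 then A else if n = 1 then B else ∅ with hf
  have hmem : ∀ n, f n ∈ ℛ := by
    intro n
    simp only [hf]
    split_ifs
    · exact hA
    · exact hB
    · exact hℛ.isSetRing.empty_mem
  have hdisj : Pairwise (Function.onFun Disjoint f) := by
    intro i j hij
    simp only [Function.onFun, hf]
    split_ifs with h1 h2 h2 h3 h3 <;>
      first
        | (exfalso; omega)
        | exact hAB
        | exact hAB.symm
        | exact disjoint_empty _
        | exact empty_disjoint _
  have hU : (⋃ n, f n) = A ∪ B := by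
    apply subset_antisymm
    · refine iUnion_subset fun n => ?_
      simp only [hf]
      split_ifs
      · exact subset_union_left
      · exact subset_union_right
      · exact empty_subset _
    · refine union_subset ?_ ?_
      · exact (by simp [hf] : f 0 = A) ▸ subset_iUnion f 0
      · exact (by simp [hf] : f 1 = B) ▸ subset_iUnion f 1
  have := hp.2 f hmem hdisj (hU ▸ hℛ.union_mem hA hB)
  rw [hU] at this
  rw [this]
  have hsum : ∑' n, p (f n) = ∑ n ∈ ({0, 1} : Finset ℕ), p (f n) := by
    refine tsum_eq_sum ?_
    intro n hn
    simp only [Finset.mem_insert, Finset.mem_singleton, not_or] at hn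
    simp [hf, hn.1, hn.2, hp.1]
  rw [hsum]
  simp [hf]

lemma IsMeasureOn.mono' {X : Type*} {ℛ : Set (Set X)} (hℛ : IsDeltaRing ℛ)
    {p : Set X → ENNReal} (hp : IsMeasureOn ℛ p) {A B : Set X}
    (hA : A ∈ ℛ) (hB : B ∈ ℛ) (hAB : A ⊆ B) : p A ≤ p B := by
  have h := hp.add_of_disjoint hℛ hA (hℛ.diff_mem hB hA) disjoint_sdiff_right
  rw [union_diff_cancel hAB] at h
  rw [h]; exact le_self_add

/-- countable subadditivity bound on the ring -/
lemma IsMeasureOn.le_tsum_of_subset {X : Type*} {ℛ : Set (Set X)} (hℛ : IsDeltaRing ℛ)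
    {p : Set X → ENNReal} (hp : IsMeasureOn ℛ p) {A : Set X} (hA : A ∈ ℛ)
    (B : ℕ → Set X) (hB : ∀ n, B n ∈ ℛ) (hsub : A ⊆ ⋃ n, B n) :
    p A ≤ ∑' n, p (B n) := by
  set C : ℕ → Set X := fun n => A ∩ disjointed B n with hC
  have hCmem : ∀ n, C n ∈ ℛ :=
    fun n => hℛ.isSetRing.inter_mem hA (hℛ.isSetRing.disjointed_mem hB n)
  have hCdisj : Pairwise (Function.onFun Disjoint C) := fun i j hij =>
    ((disjoint_disjointed B hij).mono inter_subset_right inter_subset_right)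
  have hCU : (⋃ n, C n) = A := by
    rw [hC, ← inter_iUnion, iUnion_disjointed, inter_eq_left]
    exact hsub
  have hadd := hp.2 C hCmem hCdisj (hCU ▸ hA)
  rw [hCU] at hadd
  rw [hadd]
  refine ENNReal.tsum_le_tsum fun n => ?_
  exact hp.mono' hℛ (hCmem n) (hB n) (inter_subset_right.trans (disjointed_subset B n))

theorem extend_unique {X : Type*} [mX : MeasurableSpace X]
    (ℛ : Set (Set X)) (hℛ : IsDeltaRing ℛ)
    (hmX : mX = MeasurableSpace.generateFrom ℛ)
    (p : Set X → ENNReal) (hp : IsMeasureOn ℛ p)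
    (S : ℕ → Set X) (hS : ∀ n, S n ∈ ℛ) (hc : ⋃ n, S n = univ)
    (hf : ∀ n, p (S n) ≠ ⊤) :
    ∃ P : Measure X, SigmaFinite P ∧ (∀ A ∈ ℛ, P A = p A) ∧
      ∀ P' : Measure X, SigmaFinite P' → (∀ A ∈ ℛ, P' A = p A) → P' = P := by
  classical
  set q : Set X → ENNReal := fun A => if A ∈ ℛ then p A else ⊤ with hq
  have hq0 : q ∅ = 0 := by simp [hq, hℛ.isSetRing.empty_mem, hp.1]
  set ν : OuterMeasure X := OuterMeasure.ofFunction q hq0 with hν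
  -- every element of ℛ is Carathéodory measurable
  have hcar : ∀ A ∈ ℛ, MeasurableSet[ν.caratheodory] A := by
    intro A hA
    refine OuterMeasure.ofFunction_caratheodory fun t => ?_
    by_cases ht : t ∈ ℛ
    · have h1 : t ∩ A ∈ ℛ := hℛ.isSetRing.inter_mem ht hA
      have h2 : t \ A ∈ ℛ := hℛ.diff_mem ht hA
      have hadd := hp.add_of_disjoint hℛ h1 h2
        (disjoint_sdiff_right.mono_left inter_subset_right)
      rw [inter_union_diff] at hadd
      simp only [hq, if_pos ht, if_pos h1, if_pos h2]
      rw [← hadd]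
    · simp [hq, if_neg ht]
  have hle : mX ≤ ν.caratheodory := by
    rw [hmX]
    exact MeasurableSpace.generateFrom_le hcar
  -- ν extends p
  have hext : ∀ A ∈ ℛ, ν A = p A := by
    intro A hA
    refine le_antisymm ((OuterMeasure.ofFunction_le A).trans_eq (by simp [hq, hA])) ?_
    rw [hν, OuterMeasure.ofFunction_apply]
    refine le_iInf fun f => le_iInf fun hfsub => ?_
    by_cases hall : ∀ n, f n ∈ ℛ
    · calc p A ≤ ∑' n, p (f n) := hp.le_tsum_of_subset hℛ hA f hall hfsub
        _ = ∑' n, q (f n) := by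
            refine tsum_congr fun n => ?_
            simp [hq, hall n]
    · push_neg at hall
      obtain ⟨n, hn⟩ := hall
      calc p A ≤ ⊤ := le_top
        _ = q (f n) := by simp [hq, hn]
        _ ≤ ∑' n, q (f n) := ENNReal.le_tsum n
  set P : Measure X := ν.toMeasure hle with hP
  have hmeasA : ∀ A ∈ ℛ, MeasurableSet A := by
    intro A hA
    rw [hmX]
    exact MeasurableSpace.measurableSet_generateFrom hA
  have hPA : ∀ A ∈ ℛ, P A = p A := by
    intro A hA
    rw [hP, MeasureTheory.toMeasure_apply ν hle (hmeasA A hA)]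
    exact hext A hA
  have hsf : SigmaFinite P := by
    refine ⟨⟨⟨S, fun _ => mem_univ _, fun n => ?_, hc⟩⟩⟩
    rw [hPA (S n) (hS n)]
    exact (hf n).lt_top
  refine ⟨P, hsf, hPA, fun P' _ hP' => ?_⟩
  refine MeasureTheory.Measure.ext_of_generateFrom_of_iUnion ℛ S hmX ?_ hc hS ?_ ?_
  · exact fun s hs t ht _ => hℛ.isSetRing.inter_mem hs ht
  · intro n
    rw [hP' (S n) (hS n)]
    exact hf n
  · intro s hs
    rw [hP' s hs, hPA s hs]

lemma ennreal_sub_finite {a b : ENNReal} (h1 : (a : EReal) - (b : EReal) ≠ ⊤)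
    (h2 : (a : EReal) - (b : EReal) ≠ ⊥) : a ≠ ⊤ ∧ b ≠ ⊤ := by
  induction a using ENNReal.recTopCoe with
  | top =>
    induction b using ENNReal.recTopCoe with
    | top => simp [EReal.sub_top] at h2
    | coe r => simp [EReal.coe_nnreal_eq_coe_real, EReal.top_sub_coe] at h1
  | coe r =>
    induction b using ENNReal.recTopCoe with
    | top => simp [EReal.sub_top] at h2
    | coe s => simp

/-- Let `X` be a nonempty set, `ℛ` a δ-ring on `X`, and `μ` a σ-finite
extended signed measure on `ℛ`: σ-additive, `μ ∅ = 0`, with a sequence `Sₙ ∈ ℛ` covering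
`X` on which `μ` is finite. If `(μ⁺, μ⁻)` is the Jordan decomposition of `μ` on `ℛ`, then
`μ⁺` and `μ⁻` each extend uniquely to σ-finite measures on the generated σ-algebra
`σ(ℛ)` (the ambient measurable-space structure on `X` being `σ(ℛ)`). -/
theorem jordan_parts_extend_uniquely {X : Type*} [Nonempty X] [mX : MeasurableSpace X]
    (ℛ : Set (Set X)) (hℛ : IsDeltaRing ℛ)
    (hmX : mX = MeasurableSpace.generateFrom ℛ)
    (μ : Set X → EReal) (hμ0 : μ ∅ = 0)
    (hadd : ∀ A : ℕ → Set X, (∀ n, A n ∈ ℛ) → Pairwise (Function.onFun Disjoint A) →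
      (⋃ n, A n) ∈ ℛ → HasSum (fun n => μ (A n)) (μ (⋃ n, A n)))
    (Sseq : ℕ → Set X) (hSmem : ∀ n, Sseq n ∈ ℛ) (hScover : ⋃ n, Sseq n = univ)
    (hSfin : ∀ n, μ (Sseq n) ≠ ⊤ ∧ μ (Sseq n) ≠ ⊥)
    (p m : Set X → ENNReal) (hpm : IsJordanPairOn ℛ μ p m) :
    (∃ P : Measure X, SigmaFinite P ∧ (∀ A ∈ ℛ, P A = p A) ∧
      ∀ P' : Measure X, SigmaFinite P' → (∀ A ∈ ℛ, P' A = p A) → P' = P) ∧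
    (∃ M : Measure X, SigmaFinite M ∧ (∀ A ∈ ℛ, M A = m A) ∧
      ∀ M' : Measure X, SigmaFinite M' → (∀ A ∈ ℛ, M' A = m A) → M' = M) := by
  obtain ⟨hpmeas, hmmeas, heq, -⟩ := hpm
  have hfin : ∀ n, p (Sseq n) ≠ ⊤ ∧ m (Sseq n) ≠ ⊤ := by
    intro n
    have h := heq (Sseq n) (hSmem n)
    exact ennreal_sub_finite (h ▸ (hSfin n).1) (h ▸ (hSfin n).2)
  exact ⟨extend_unique ℛ hℛ hmX p hpmeas Sseq hSmem hScover (fun n => (hfin n).1),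
    extend_unique ℛ hℛ hmX m hmmeas Sseq hSmem hScover (fun n => (hfin n).2)⟩
end

section
/- Let S be a nonempty set and 𝒮 a δ-ring on S with an increasing sequence Sₙ ∈ 𝒮 covering S. For each A ∈ 𝒮 let F_A = (F_A⁺, F_A⁻) be a quasi-Lévy type measure, and suppose that for each Borel set B ⊆ ℝ bounded away from 0 the map A ↦ F_A(B) = F_A⁺(B) − F_A⁻(B) is a real-valued signed measure on 𝒮. Set J(A,B) = ∫_B (1 ∧ x²) F_A(dx), and assume (★): for every A ∈ 𝒮, sup ∑_{i∈I} |J(A_i,B_i)| < ∞, the supremum over all finite families of pairwise disjoint rectangles A_i × B_i with A_i ∈ 𝒮, A_i ⊆ A, B_i ∈ ℬ(ℝ). Then for every sequence {Aₙ} ⊆ 𝒮 with Aₙ decreasing and ⋂ₙ Aₙ = ∅, one has ∫_ℝ (1 ∧ x²) |F_{Aₙ}|(dx) → 0 as n → ∞, where |F_A| = F_A⁺ + F_A⁻. -/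
/-!
Split `Aₙ` into the disjoint blocks `Dₖ = Aₖ \ Aₖ₊₁`, so that `Aₙ = ⋃_{k ≥ n} Dₖ`.
Pairing each `Dₖ` with a Hahn set `Nₖ` of `(F_{Dₖ}⁺, F_{Dₖ}⁻)`, the rectangles `Dₖ × Nₖ`,
`Dₖ × Nₖᶜ` have `|J(Dₖ, Nₖ)| + |J(Dₖ, Nₖᶜ)| = ∫ (1 ∧ x²) d|F_{Dₖ}|`, so (★) makes
`∑ₖ ∫ (1 ∧ x²) d|F_{Dₖ}|` converge. On Borel sets bounded away from `0`, σ-additivity of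
`A ↦ F_A` gives `F_{Aₙ}⁺ + ∑_{k ≥ n} F_{Dₖ}⁻ = F_{Aₙ}⁻ + ∑_{k ≥ n} F_{Dₖ}⁺`; no measure charges `0`,
so this is an identity of measures. As `F_{Aₙ}⁺ ⟂ F_{Aₙ}⁻`, it forces
`F_{Aₙ}^± ≤ ∑_{k ≥ n} F_{Dₖ}^±`, and `∫ (1 ∧ x²) d|F_{Aₙ}|` is bounded by the tail of a
convergent series.
-/

open MeasureTheory Set Filter Topology

/-- A Borel set is bounded away from zero if it is disjoint from some interval
`(-r, r)`, `r > 0`. -/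
def BoundedAwayFromZero (B : Set ℝ) : Prop := ∃ r > 0, ∀ x ∈ B, r ≤ |x|

/-- A quasi-Lévy type measure, presented as its Jordan pair `(ν⁺, ν⁻)`: two mutually
singular Borel measures on `ℝ` with no mass at `0`, finite on every Borel set bounded
away from `0`, and with `∫ (1 ∧ x²) d(ν⁺ + ν⁻) < ∞`. -/
def IsQuasiLevyPair (νp νm : Measure ℝ) : Prop :=
  νp {0} = 0 ∧ νm {0} = 0 ∧ νp.MutuallySingular νm ∧
  (∀ r : ℝ, 0 < r → νp {x | r ≤ |x|} < ⊤ ∧ νm {x | r ≤ |x|} < ⊤) ∧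
  ∫⁻ x, ENNReal.ofReal (min 1 (x ^ 2)) ∂(νp + νm) < ⊤

/-- `J(A, B) = ∫_B (1 ∧ x²) F_A(dx)` for the quasi-Lévy family `F_A = F_A⁺ - F_A⁻`. -/
noncomputable def Jfun {S : Type*} (Fp Fm : Set S → Measure ℝ) (A : Set S) (B : Set ℝ) : ℝ :=
  (∫⁻ x in B, ENNReal.ofReal (min 1 (x ^ 2)) ∂(Fp A)).toReal -
  (∫⁻ x in B, ENNReal.ofReal (min 1 (x ^ 2)) ∂(Fm A)).toReal

open Function
open scoped ENNReal

noncomputable def levyMass (μ : Measure ℝ) : ℝ≥0∞ :=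
  ∫⁻ x, ENNReal.ofReal (min 1 (x ^ 2)) ∂μ

lemma levyMass_mono {μ ν : Measure ℝ} (h : μ ≤ ν) : levyMass μ ≤ levyMass ν :=
  lintegral_mono' h le_rfl

lemma levyMass_add (μ ν : Measure ℝ) : levyMass (μ + ν) = levyMass μ + levyMass ν :=
  lintegral_add_measure _ μ ν

lemma levyMass_sum {ι : Type*} (μ : ι → Measure ℝ) :
    levyMass (Measure.sum μ) = ∑' i, levyMass (μ i) :=
  lintegral_sum_measure _ μ

lemma IsQuasiLevyPair.levyMass_ne_top {νp νm : Measure ℝ} (h : IsQuasiLevyPair νp νm) :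
    levyMass (νp + νm) ≠ ⊤ :=
  h.2.2.2.2.ne

lemma IsQuasiLevyPair.mutuallySingular {νp νm : Measure ℝ} (h : IsQuasiLevyPair νp νm) :
    νp ⟂ₘ νm :=
  h.2.2.1

lemma measure_ne_top_of_levyMass_ne_top {μ : Measure ℝ} {B : Set ℝ}
    (hB : BoundedAwayFromZero B) (hμ : levyMass μ ≠ ⊤) : μ B ≠ ⊤ := by
  obtain ⟨r, hr, hrB⟩ := hB
  set c := ENNReal.ofReal (min 1 (r ^ 2))
  have hc : c ≠ 0 := by simp [c, hr.ne']
  have hBsub : B ⊆ {x | c ≤ ENNReal.ofReal (min 1 (x ^ 2))} := fun x hx =>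
    ENNReal.ofReal_le_ofReal <| min_le_min_left 1 <| by
      simpa [sq_abs] using pow_le_pow_left₀ hr.le (hrB x hx) 2
  have hmarkov := mul_meas_ge_le_lintegral₀ (μ := μ)
    (by fun_prop : Measurable fun x : ℝ => ENNReal.ofReal (min 1 (x ^ 2))).aemeasurable c
  refine ne_top_of_le_ne_top (fun htop => ?_) (measure_mono hBsub)
  exact hμ (top_le_iff.mp (ENNReal.mul_top hc ▸ htop ▸ hmarkov))

lemma MeasureTheory.Measure.ext_of_boundedAwayFromZero {α β : Measure ℝ} (hα : α {0} = 0) (hβ : β {0} = 0)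
    (h : ∀ B, MeasurableSet B → BoundedAwayFromZero B → α B = β B) : α = β := by
  set V : ℕ → Set ℝ := fun j => {x | 1 / ((j : ℝ) + 1) ≤ |x|}
  have hVpos (j : ℕ) : (0 : ℝ) < 1 / ((j : ℝ) + 1) := by positivity
  have hV : Monotone V := by
    intro i j hij x hx
    simp only [V, mem_ofPred_eq] at hx ⊢
    refine le_trans (one_div_le_one_div_of_le (by positivity) ?_) hx
    exact_mod_cast Nat.succ_le_succ hij
  have hdiff (s : Set ℝ) : s \ {0} = ⋃ j, s ∩ V j := by
    ext x
    simp only [Set.mem_sdiff, mem_singleton_iff, mem_iUnion, mem_inter_iff, V, mem_ofPred_eq]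
    refine ⟨fun ⟨hs, hx⟩ => ?_, fun ⟨j, hs, hj⟩ => ⟨hs, ?_⟩⟩
    · obtain ⟨j, hj⟩ := exists_nat_one_div_lt (abs_pos.mpr hx)
      exact ⟨j, hs, hj.le⟩
    · rintro rfl
      rw [abs_zero] at hj
      linarith [hVpos j]
  have hmono (s : Set ℝ) : Monotone fun j => s ∩ V j := fun i j hij =>
    inter_subset_inter_right s (hV hij)
  ext s hs
  rw [← measure_sdiff_null hα, ← measure_sdiff_null hβ, hdiff, (hmono s).measure_iUnion,
    (hmono s).measure_iUnion]
  exact iSup_congr fun j => h _ (hs.inter (measurableSet_le measurable_const measurable_abs))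
    ⟨_, hVpos j, fun x hx => hx.2⟩

lemma MeasureTheory.Measure.MutuallySingular.le_of_add_eq {α : Type*} [MeasurableSpace α]
    {μ ν ρ σ : Measure α} (h : μ ⟂ₘ ν) (heq : μ + σ = ν + ρ) : μ ≤ ρ := by
  have hμ : μ = μ.restrict h.nullSetᶜ := by
    rw [← add_zero (μ.restrict _), ← h.restrict_nullSet, add_comm,
      Measure.restrict_add_restrict_compl h.measurableSet_nullSet]
  calc μ = μ.restrict h.nullSetᶜ := hμ
    _ ≤ (μ + σ).restrict h.nullSetᶜ := by
      rw [Measure.restrict_add]; exact Measure.le_add_right le_rfl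
    _ = ρ.restrict h.nullSetᶜ := by
      rw [heq, Measure.restrict_add, h.restrict_compl_nullSet, zero_add]
    _ ≤ ρ := Measure.restrict_le_self

lemma ENNReal.add_tsum_eq_add_tsum_of_hasSum {ι : Type*} {a b : ℝ≥0∞} {p q : ι → ℝ≥0∞}
    (ha : a ≠ ⊤) (hb : b ≠ ⊤) (hp : ∑' i, p i ≠ ⊤) (hq : ∑' i, q i ≠ ⊤)
    (h : HasSum (fun i => (p i).toReal - (q i).toReal) (a.toReal - b.toReal)) :
    a + ∑' i, q i = b + ∑' i, p i := by
  have hsum :=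
    h.unique ((ENNReal.summable_toReal hp).hasSum.sub (ENNReal.summable_toReal hq).hasSum)
  rw [← ENNReal.toReal_eq_toReal_iff' (ENNReal.add_ne_top.mpr ⟨ha, hq⟩)
    (ENNReal.add_ne_top.mpr ⟨hb, hp⟩), ENNReal.toReal_add ha hq, ENNReal.toReal_add hb hp,
    ENNReal.tsum_toReal_eq (ENNReal.ne_top_of_tsum_ne_top hq),
    ENNReal.tsum_toReal_eq (ENNReal.ne_top_of_tsum_ne_top hp)]
  linarith

lemma MeasureTheory.Measure.MutuallySingular.toReal_lintegral_add_measure {α : Type*}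
    [MeasurableSpace α] {μ ν : Measure α} (h : μ ⟂ₘ ν) (f : α → ℝ≥0∞)
    (hf : ∫⁻ x, f x ∂(μ + ν) ≠ ⊤) :
    (∫⁻ x, f x ∂(μ + ν)).toReal =
      |(∫⁻ x in h.nullSet, f x ∂μ).toReal - (∫⁻ x in h.nullSet, f x ∂ν).toReal| +
      |(∫⁻ x in h.nullSetᶜ, f x ∂μ).toReal - (∫⁻ x in h.nullSetᶜ, f x ∂ν).toReal| := by
  have hμ : ∫⁻ x, f x ∂μ = ∫⁻ x in h.nullSetᶜ, f x ∂μ := by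
    rw [← lintegral_add_compl f h.measurableSet_nullSet, h.restrict_nullSet, lintegral_zero_measure,
      zero_add]
  have hν : ∫⁻ x, f x ∂ν = ∫⁻ x in h.nullSet, f x ∂ν := by
    rw [← lintegral_add_compl f h.measurableSet_nullSet, h.restrict_compl_nullSet,
      lintegral_zero_measure, add_zero]
  rw [lintegral_add_measure] at hf ⊢
  rw [h.restrict_nullSet, h.restrict_compl_nullSet, lintegral_zero_measure, ENNReal.toReal_zero,
    zero_sub, sub_zero, abs_neg, abs_of_nonneg ENNReal.toReal_nonneg,
    abs_of_nonneg ENNReal.toReal_nonneg, ENNReal.toReal_add (ENNReal.add_ne_top.mp hf).1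
    (ENNReal.add_ne_top.mp hf).2, hμ, hν, add_comm]

lemma Antitone.iUnion_sdiff_succ_add {α : Type*} {A : ℕ → Set α} (hA : Antitone A) (n : ℕ) :
    ⋃ k, (A (k + n) \ A (k + n + 1)) = A n \ ⋂ k, A k := by
  refine Subset.antisymm (iUnion_subset fun k x hx => ⟨hA (Nat.le_add_left n k) hx.1,
    fun hmem => hx.2 (mem_iInter.mp hmem _)⟩) fun x ⟨hxn, hx⟩ => ?_
  by_contra hU
  have hxA (k : ℕ) : x ∈ A (k + n) := by
    induction k with
    | zero => simpa using hxn
    | succ k ih =>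
      by_contra hk
      exact hU (mem_iUnion.mpr ⟨k, ih, by rwa [Nat.succ_add] at hk⟩)
  exact hx (mem_iInter.mpr fun k => hA (Nat.le_add_right k n) (hxA k))

lemma Antitone.pairwise_disjoint_sdiff_succ {α : Type*} {A : ℕ → Set α} (hA : Antitone A) :
    Pairwise (Disjoint on fun k => A k \ A (k + 1)) :=
  (pairwise_disjoint_on _).mpr fun _ _ hij =>
    disjoint_left.mpr fun _ hi hj => hi.2 (hA (Nat.succ_le_of_lt hij) hj.1)

section RectSums

variable {T X : Type*} [MeasurableSpace X] {𝒜 : Set (Set T)} {Q : Set T → Set X → ℝ} {A : Set T}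

lemma sum_abs_mem_rectSums {ι : Type*} [Fintype ι] {As : ι → Set T} {Bs : ι → Set X}
    (h : ∀ i, As i ∈ 𝒜 ∧ As i ⊆ A ∧ MeasurableSet (Bs i))
    (hdisj : Pairwise fun i j => Disjoint (As i ×ˢ Bs i) (As j ×ˢ Bs j)) :
    ∑ i, |Q (As i) (Bs i)| ∈ RectSums 𝒜 Q A := by
  set e := (Fintype.equivFin ι).symm
  exact ⟨_, As ∘ e, Bs ∘ e, fun i => h (e i), fun i j hij => hdisj (e.injective.ne hij),
    (e.sum_comp fun i => |Q (As i) (Bs i)|).symm⟩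

lemma sum_range_abs_add_abs_compl_mem_rectSums {D : ℕ → Set T} {E : ℕ → Set X}
    (hD : ∀ k, D k ∈ 𝒜 ∧ D k ⊆ A) (hdisj : Pairwise (Disjoint on D))
    (hE : ∀ k, MeasurableSet (E k)) (n : ℕ) :
    ∑ k ∈ Finset.range n, (|Q (D k) (E k)| + |Q (D k) (E k)ᶜ|) ∈ RectSums 𝒜 Q A := by
  have hmem := sum_abs_mem_rectSums (Q := Q) (As := fun i : Fin n × Bool => D i.1)
    (Bs := fun i => bif i.2 then E i.1 else (E i.1)ᶜ)
    (fun i => ⟨(hD i.1).1, (hD i.1).2, by cases i.2 <;> simp [hE, (hE _).compl]⟩)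
    (by
      rintro ⟨k, b⟩ ⟨l, c⟩ hne
      by_cases hkl : k = l
      · subst hkl
        have hbc : b ≠ c := fun h => hne (by rw [h])
        refine Set.Disjoint.set_prod_right ?_ _ _
        cases b <;> cases c <;> simp_all [disjoint_compl_left, disjoint_compl_right]
      · exact Set.Disjoint.set_prod_left (hdisj (Fin.val_ne_of_ne hkl)) _ _)
  rw [← Fin.sum_univ_eq_sum_range]
  simpa [Fintype.sum_prod_type, add_comm] using hmem

end RectSums

section LevyFamily

variable {S : Type*} {𝒮 : Set (Set S)} {Fp Fm : Set S → Measure ℝ}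

lemma tsum_levyMass_ne_top (hql : ∀ A ∈ 𝒮, IsQuasiLevyPair (Fp A) (Fm A)) {A : Set S}
    (hstar : BddAbove (RectSums 𝒮 (Jfun Fp Fm) A)) {D : ℕ → Set S} (hD : ∀ k, D k ∈ 𝒮 ∧ D k ⊆ A)
    (hdisj : Pairwise (Disjoint on D)) :
    ∑' k, levyMass (Fp (D k) + Fm (D k)) ≠ ⊤ := by
  obtain ⟨C, hC⟩ := hstar
  have hsing (k : ℕ) := (hql (D k) (hD k).1).mutuallySingular
  have hpartial (n : ℕ) :
      ∑ k ∈ Finset.range n, levyMass (Fp (D k) + Fm (D k)) ≤ ENNReal.ofReal C := by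
    have hfin (k : ℕ) := (hql _ (hD k).1).levyMass_ne_top
    rw [← ENNReal.ofReal_toReal (ENNReal.sum_ne_top.mpr fun k _ => hfin k),
      ENNReal.toReal_sum fun k _ => hfin k]
    refine ENNReal.ofReal_le_ofReal (hC ?_)
    convert sum_range_abs_add_abs_compl_mem_rectSums hD hdisj
      (fun k => (hsing k).measurableSet_nullSet) n using 2 with k
    exact (hsing k).toReal_lintegral_add_measure _ (hfin k)
  exact ne_top_of_le_ne_top ENNReal.ofReal_ne_top (ENNReal.tsum_le_of_sum_range_le hpartial)

lemma add_sum_eq_add_sum_of_iUnion_eq (hql : ∀ A ∈ 𝒮, IsQuasiLevyPair (Fp A) (Fm A))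
    (hsigned : ∀ B : Set ℝ, MeasurableSet B → BoundedAwayFromZero B →
      IsSignedMeasureOn 𝒮 fun A => (Fp A B).toReal - (Fm A B).toReal)
    {A : Set S} {D : ℕ → Set S} (hA : A ∈ 𝒮) (hD : ∀ k, D k ∈ 𝒮)
    (hdisj : Pairwise (Disjoint on D)) (hUnion : ⋃ k, D k = A)
    (hfin : ∑' k, levyMass (Fp (D k) + Fm (D k)) ≠ ⊤) :
    Fp A + Measure.sum (fun k => Fm (D k)) = Fm A + Measure.sum (fun k => Fp (D k)) := by
  have hsumfin {F : Set S → Measure ℝ}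
      (hF : ∀ k, levyMass (F (D k)) ≤ levyMass (Fp (D k) + Fm (D k))) :
      levyMass (Measure.sum fun k => F (D k)) ≠ ⊤ := by
    rw [levyMass_sum]
    exact ne_top_of_le_ne_top hfin (ENNReal.tsum_le_tsum hF)
  have hAfin : levyMass (Fp A) ≠ ⊤ ∧ levyMass (Fm A) ≠ ⊤ :=
    ENNReal.add_ne_top.mp (levyMass_add (Fp A) (Fm A) ▸ (hql A hA).levyMass_ne_top)
  refine Measure.ext_of_boundedAwayFromZero ?_ ?_ fun B hB hBaway => ?_
  · simp [Measure.sum_apply _ (measurableSet_singleton _), (hql A hA).1, (hql _ (hD _)).2.1]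
  · simp [Measure.sum_apply _ (measurableSet_singleton _), (hql A hA).2.1, (hql _ (hD _)).1]
  have hsum := (hsigned B hB hBaway).2 D hD hdisj (hUnion ▸ hA)
  rw [hUnion] at hsum
  simp only [Measure.add_apply, Measure.sum_apply _ hB]
  refine ENNReal.add_tsum_eq_add_tsum_of_hasSum
    (measure_ne_top_of_levyMass_ne_top hBaway hAfin.1)
    (measure_ne_top_of_levyMass_ne_top hBaway hAfin.2) ?_ ?_ hsum
  · rw [← Measure.sum_apply _ hB]
    exact measure_ne_top_of_levyMass_ne_top hBaway (hsumfin fun k => levyMass_add _ _ ▸ le_self_add)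
  · rw [← Measure.sum_apply _ hB]
    exact measure_ne_top_of_levyMass_ne_top hBaway (hsumfin fun k => levyMass_add _ _ ▸ le_add_self)

lemma levyMass_le_tsum_of_iUnion_eq (hql : ∀ A ∈ 𝒮, IsQuasiLevyPair (Fp A) (Fm A))
    (hsigned : ∀ B : Set ℝ, MeasurableSet B → BoundedAwayFromZero B →
      IsSignedMeasureOn 𝒮 fun A => (Fp A B).toReal - (Fm A B).toReal)
    {A : Set S} {D : ℕ → Set S} (hA : A ∈ 𝒮) (hD : ∀ k, D k ∈ 𝒮)
    (hdisj : Pairwise (Disjoint on D)) (hUnion : ⋃ k, D k = A)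
    (hfin : ∑' k, levyMass (Fp (D k) + Fm (D k)) ≠ ⊤) :
    levyMass (Fp A + Fm A) ≤ ∑' k, levyMass (Fp (D k) + Fm (D k)) := by
  have heq := add_sum_eq_add_sum_of_iUnion_eq hql hsigned hA hD hdisj hUnion hfin
  have hsing := (hql A hA).mutuallySingular
  calc levyMass (Fp A + Fm A)
      ≤ levyMass (Measure.sum (fun k => Fp (D k)) + Measure.sum fun k => Fm (D k)) :=
        levyMass_mono (add_le_add (hsing.le_of_add_eq heq) (hsing.symm.le_of_add_eq heq.symm))
    _ = ∑' k, levyMass (Fp (D k) + Fm (D k)) := by rw [Measure.sum_add_sum, levyMass_sum]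

end LevyFamily

theorem tendsto_levy_mass_of_antitone_general {S : Type*}
    (𝒮 : Set (Set S)) (h𝒮 : IsDeltaRing 𝒮)
    (Fp Fm : Set S → Measure ℝ)
    (hql : ∀ A ∈ 𝒮, IsQuasiLevyPair (Fp A) (Fm A))
    (hsigned : ∀ B : Set ℝ, MeasurableSet B → BoundedAwayFromZero B →
      IsSignedMeasureOn 𝒮 fun A => (Fp A B).toReal - (Fm A B).toReal)
    (hstar : ∀ A ∈ 𝒮, BddAbove (RectSums 𝒮 (Jfun Fp Fm) A))
    (A : ℕ → Set S) (hA : ∀ n, A n ∈ 𝒮) (hanti : Antitone A)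
    (hempty : ⋂ n, A n = ∅) :
    Tendsto (fun n => ∫⁻ x, ENNReal.ofReal (min 1 (x ^ 2)) ∂(Fp (A n) + Fm (A n)))
      atTop (nhds 0) := by
  set D : ℕ → Set S := fun k => A k \ A (k + 1)
  have hD (k : ℕ) : D k ∈ 𝒮 := h𝒮.diff_mem (hA k) (hA (k + 1))
  have hdisj : Pairwise (Disjoint on D) := hanti.pairwise_disjoint_sdiff_succ
  have hfin : ∑' k, levyMass (Fp (D k) + Fm (D k)) ≠ ⊤ :=
    tsum_levyMass_ne_top hql (hstar _ (hA 0))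
      (fun k => ⟨hD k, sdiff_subset.trans (hanti k.zero_le)⟩) hdisj
  have htail (n : ℕ) :
      levyMass (Fp (A n) + Fm (A n)) ≤ ∑' k, levyMass (Fp (D (k + n)) + Fm (D (k + n))) :=
    levyMass_le_tsum_of_iUnion_eq hql hsigned (hA n) (fun k => hD (k + n))
      (hdisj.comp_of_injective (add_left_injective n))
      (by rw [hanti.iUnion_sdiff_succ_add, hempty, sdiff_empty])
      (ne_top_of_le_ne_top hfin (ENNReal.tsum_comp_le_tsum_of_injective (add_left_injective n) _))
  exact tendsto_of_tendsto_of_tendsto_of_le_of_le tendsto_const_nhds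
    (ENNReal.tendsto_sum_nat_add _ hfin) (fun _ => bot_le) htail

/-- Under condition (★) — finiteness, for every `A ∈ 𝒮`, of the supremum
of `∑ᵢ |J(Aᵢ,Bᵢ)|` over finite disjoint rectangle families inside `A × ℝ`, where
`J(A,B) = ∫_B (1 ∧ x²) F_A(dx)` — for every decreasing sequence `Aₙ` in the δ-ring `𝒮`
with empty intersection, `∫_ℝ (1 ∧ x²) |F_{Aₙ}|(dx) → 0`, where `|F_A| = F_A⁺ + F_A⁻`. -/
theorem tendsto_levy_mass_of_antitone {S : Type*} [Nonempty S]
    (𝒮 : Set (Set S)) (h𝒮 : IsDeltaRing 𝒮)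
    (Sseq : ℕ → Set S) (hSmem : ∀ n, Sseq n ∈ 𝒮) (hSmono : Monotone Sseq)
    (hScover : ⋃ n, Sseq n = univ)
    (Fp Fm : Set S → Measure ℝ)
    (hql : ∀ A ∈ 𝒮, IsQuasiLevyPair (Fp A) (Fm A))
    (hsigned : ∀ B : Set ℝ, MeasurableSet B → BoundedAwayFromZero B →
      IsSignedMeasureOn 𝒮 fun A => (Fp A B).toReal - (Fm A B).toReal)
    (hstar : ∀ A ∈ 𝒮, BddAbove (RectSums 𝒮 (Jfun Fp Fm) A))
    (A : ℕ → Set S) (hA : ∀ n, A n ∈ 𝒮) (hanti : Antitone A)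
    (hempty : ⋂ n, A n = ∅) :
    Tendsto (fun n => ∫⁻ x, ENNReal.ofReal (min 1 (x ^ 2)) ∂(Fp (A n) + Fm (A n)))
      atTop (nhds 0) :=
  tendsto_levy_mass_of_antitone_general 𝒮 h𝒮 Fp Fm hql hsigned hstar A hA hanti hempty
end
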